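/- arXiv:1905.07769 — 3 statements merged into one kernel-verified Lean document; each statement's English description precedes it below -/
import Mathlib

section
/- Let F : P(ℝ^d) → ℝ be convex, of class C^1, bounded from below, and continuous with respect to weak convergence of probability measures, and let (σ_n) be a sequence of positive reals decreasing to 0. Then V^{σ_n} Γ-converges to F on P_2(ℝ^d) as n → ∞, in the following sense: (i) for every m ∈ P_2(ℝ^d) and every sequence (m_n) in P_2(ℝ^d) converging weakly to m, liminf_{n→∞} V^{σ_n}(m_n) ≥ F(m); (ii) for every m ∈ P_2(ℝ^d), the mollified measures with densities (m * f_n)(x) = ∫ f_n(x−y) m(dy), where f is the standard Gaussian density on ℝ^d and f_n(x) = σ_n^{−d} f(x/σ_n), converge weakly to m and satisfy limsup_{n→∞} V^{σ_n}(m * f_n) ≤ F(m). -/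
open MeasureTheory Real Filter Topology
open scoped ENNReal NNReal RealInnerProductSpace

noncomputable section

/-- Euclidean space `ℝ^d`. -/
abbrev Rd (d : ℕ) : Type := EuclideanSpace ℝ (Fin d)

/-- Borel probability measures. -/
abbrev PM (α : Type*) [MeasurableSpace α] := MeasureTheory.ProbabilityMeasure α

/-- Finite second moment, i.e. membership in `P₂`. -/
def P2 {α : Type*} [MeasurableSpace α] [NormedAddCommGroup α] (μ : PM α) : Prop :=
  Integrable (fun x => ‖x‖ ^ 2) (μ : Measure α)

/-- The convex combination `(1-λ)·μ + λ·ν` of probability measures (with `λ` clamped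
to `[0,1]`, which is the only range in which it is ever used). -/
def convComb {α : Type*} [MeasurableSpace α] (lam : ℝ) (μ ν : PM α) : PM α :=
  ⟨(ENNReal.ofReal (1 - max 0 (min lam 1))) • (μ : Measure α)
      + (ENNReal.ofReal (max 0 (min lam 1))) • (ν : Measure α), by
    have ht0 : 0 ≤ max 0 (min lam 1) := le_max_left _ _
    have ht1 : max 0 (min lam 1) ≤ 1 := max_le zero_le_one (min_le_right _ _)
    constructor
    simp only [Measure.coe_add, Measure.coe_smul, Pi.add_apply, Pi.smul_apply,
      measure_univ, smul_eq_mul, mul_one]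
    rw [← ENNReal.ofReal_add (by linarith) ht0]
    norm_num⟩

/-- `F` is of class `C¹` on the space of probability measures, with linear functional
derivative `DF`. -/
structure IsC1 {α : Type*} [MeasurableSpace α] [TopologicalSpace α] [OpensMeasurableSpace α]
    (F : PM α → ℝ) (DF : PM α → α → ℝ) : Prop where
  bounded : ∃ C, ∀ m x, |DF m x| ≤ C
  cont : Continuous fun p : PM α × α => DF p.1 p.2
  deriv_eq : ∀ m m' : PM α,
    F m' - F m = ∫ lam in (0:ℝ)..1,
      (∫ x, DF (convComb lam m m') x ∂(m' : Measure α)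
        - ∫ x, DF (convComb lam m m') x ∂(m : Measure α))

/-- Convexity of a function of probability measures. -/
def ConvexPM {α : Type*} [MeasurableSpace α] (F : PM α → ℝ) : Prop :=
  ∀ (m m' : PM α) (a : ℝ), 0 ≤ a → a ≤ 1 →
    F (convComb a m m') ≤ (1 - a) * F m + a * F m'

/-- Assumptions on the Gibbs potential `U`. -/
structure GibbsPotential {d : ℕ} (U : Rd d → ℝ) : Prop where
  smooth : ContDiff ℝ (⊤ : ℕ∞) U
  lipGrad : ∃ K : ℝ≥0, LipschitzWith K (fun x => gradient U x)
  diss : ∃ cU cU' : ℝ, 0 < cU ∧ ∀ x : Rd d, cU * ‖x‖ ^ 2 + cU' ≤ ⟪gradient U x, x⟫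
  isDensity : ∫ x, Real.exp (-U x) = 1

/-- `ρ` is a density (w.r.t. Lebesgue) of the probability measure `m`, for which the
relative entropy integrand `ρ log ρ + ρ U` (note `log (ρ/e^{-U}) = log ρ + U`) is integrable. -/
def EntPred {d : ℕ} (U : Rd d → ℝ) (m : PM (Rd d)) (ρ : Rd d → ℝ) : Prop :=
  Measurable ρ ∧ (∀ x, 0 ≤ ρ x) ∧
    (m : Measure (Rd d)) = (volume : Measure (Rd d)).withDensity (fun x => ENNReal.ofReal (ρ x)) ∧
    Integrable (fun x => ρ x * Real.log (ρ x) + ρ x * U x)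

/-- The relative entropy `H(m) = ∫ m log (m / e^{-U})`, valued in `(-∞, ∞]`;
it equals `+∞` unless `m` is absolutely continuous with an integrable entropy integrand
(for probability measures the negative part of the integrand is always integrable, so this
agrees with the usual convention). -/
def relEnt {d : ℕ} (U : Rd d → ℝ) (m : PM (Rd d)) : EReal :=
  letI : Decidable (∃ ρ, EntPred U m ρ) := Classical.propDecidable _
  if h : ∃ ρ, EntPred U m ρ then
    ((∫ x, (h.choose x * Real.log (h.choose x) + h.choose x * U x) : ℝ) : EReal)
  else ⊤

/-- The free energy `V^σ(m) = F(m) + (σ²/2) H(m)`, valued in `(-∞, ∞]`. -/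
def freeEnergy {d : ℕ} (σ : ℝ) (U : Rd d → ℝ) (F : PM (Rd d) → ℝ) (m : PM (Rd d)) : EReal :=
  (F m : EReal) + ((σ ^ 2 / 2 : ℝ) : EReal) * relEnt U m

/-- The 2-Wasserstein distance. -/
def W2 {α : Type*} [MeasurableSpace α] [NormedAddCommGroup α] (μ ν : PM α) : ℝ :=
  sInf { r : ℝ | ∃ cpl : Measure (α × α),
    cpl.map Prod.fst = (μ : Measure α) ∧ cpl.map Prod.snd = (ν : Measure α) ∧
    r = ((∫⁻ p, ENNReal.ofReal (‖p.1 - p.2‖ ^ 2) ∂cpl).toReal) ^ (1 / 2 : ℝ) }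

/-- Divergence of a vector field on `ℝ^d`. -/
def diverg {d : ℕ} (v : Rd d → Rd d) (x : Rd d) : ℝ :=
  LinearMap.trace ℝ (Rd d) (fderiv ℝ v x : Rd d →ₗ[ℝ] Rd d)
/-- The standard Gaussian density on `ℝ^d`. -/
def stdGauss {d : ℕ} (x : Rd d) : ℝ := (2 * π) ^ (-(d : ℝ) / 2) * Real.exp (-‖x‖ ^ 2 / 2)

/-- The density of the mollification `m * f_σ`, where `f_σ(x) = σ^{-d} f(x/σ)` and
`f` is the standard Gaussian density. -/
def mollDensity {d : ℕ} (s : ℝ) (m : PM (Rd d)) (x : Rd d) : ℝ :=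
  ∫ y, (s ^ d)⁻¹ * stdGauss (s⁻¹ • (x - y)) ∂(m : Measure (Rd d))


section Helpers

variable {d : ℕ}

lemma stdGauss_nonneg (x : Rd d) : 0 ≤ stdGauss x := by
  unfold stdGauss; positivity

lemma stdGauss_le (x : Rd d) : stdGauss x ≤ (2 * π) ^ (-(d : ℝ) / 2) := by
  unfold stdGauss
  nth_rewrite 2 [← mul_one ((2 * π) ^ (-(d : ℝ) / 2))]
  have h1 : Real.exp (-‖x‖ ^ 2 / 2) ≤ 1 :=
    Real.exp_le_one_iff.2 (by nlinarith [sq_nonneg (‖x‖)])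
  exact mul_le_mul_of_nonneg_left h1 (le_of_lt (Real.rpow_pos_of_pos (by positivity) _))

lemma continuous_stdGauss : Continuous (stdGauss (d := d)) := by
  unfold stdGauss; fun_prop

lemma integrable_rexp_neg_mul_sq_norm {b : ℝ} (hb : 0 < b) :
    Integrable (fun x : Rd d => Real.exp (-b * ‖x‖ ^ 2)) := by
  have h := (GaussianFourier.integrable_cexp_neg_mul_sq_norm_add (V := Rd d)
    (b := (b : ℂ)) (by simpa using hb) 0 0).norm
  refine h.congr (Eventually.of_forall fun x => ?_)
  simp [Complex.norm_exp]
  exact Or.inl (by norm_cast)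

lemma integrable_stdGauss : Integrable (stdGauss (d := d)) := by
  have h := (integrable_rexp_neg_mul_sq_norm (d := d) (b := 1/2)
    (by norm_num)).const_mul ((2 * π) ^ (-(d : ℝ) / 2))
  refine h.congr (Eventually.of_forall fun x => ?_)
  unfold stdGauss
  ring_nf

lemma integral_stdGauss : ∫ x : Rd d, stdGauss x = 1 := by
  have h := GaussianFourier.integral_rexp_neg_mul_sq_norm (V := Rd d) (b := 1/2) (by norm_num)
  unfold stdGauss
  rw [integral_const_mul]
  have : ∀ x : Rd d, Real.exp (-‖x‖ ^ 2 / 2) = Real.exp (-(1/2) * ‖x‖ ^ 2) := by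
    intro x; ring_nf
  simp_rw [this, h, finrank_euclideanSpace_fin]
  rw [show ((π : ℝ) / (1/2)) = 2 * π by ring, ← Real.rpow_add (by positivity), neg_div, neg_add_cancel, Real.rpow_zero]

lemma integrable_sq_stdGauss : Integrable (fun x : Rd d => ‖x‖ ^ 2 * stdGauss x) := by
  have h := ((integrable_rexp_neg_mul_sq_norm (d := d) (b := 1/4)
    (by norm_num)).const_mul ((2 * π) ^ (-(d : ℝ) / 2) * 4))
  refine Integrable.mono' h ?_ (Eventually.of_forall fun x => ?_)
  · exact (continuous_norm.pow 2).mul continuous_stdGauss |>.aestronglyMeasurable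
  · have h0 : (0:ℝ) ≤ (2 * π) ^ (-(d : ℝ) / 2) := le_of_lt (Real.rpow_pos_of_pos (by positivity) _)
    rw [Real.norm_of_nonneg (mul_nonneg (by positivity) (stdGauss_nonneg x))]
    unfold stdGauss
    have key : ‖x‖ ^ 2 * Real.exp (-‖x‖ ^ 2 / 2) ≤ 4 * Real.exp (-(1/4) * ‖x‖ ^ 2) := by
      have e1 : Real.exp (-‖x‖ ^ 2 / 2) = Real.exp (-‖x‖^2/4) * Real.exp (-(1/4) * ‖x‖ ^ 2) := by
        rw [← Real.exp_add]; ring_nf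
      rw [e1]
      have h2 : ‖x‖ ^ 2 * Real.exp (-‖x‖ ^ 2 / 4) ≤ 4 := by
        have h3 := Real.add_one_le_exp (‖x‖ ^ 2 / 4)
        have h4 := Real.exp_pos (-‖x‖ ^ 2 / 4)
        have h5 : Real.exp (-‖x‖ ^ 2 / 4) * Real.exp (‖x‖ ^ 2 / 4) = 1 := by
          rw [← Real.exp_add]; ring_nf; exact Real.exp_zero
        nlinarith [sq_nonneg (‖x‖), Real.exp_pos (‖x‖ ^ 2 / 4)]
      have := mul_le_mul_of_nonneg_right h2 (le_of_lt (Real.exp_pos (-(1/4) * ‖x‖ ^ 2)))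
      calc ‖x‖ ^ 2 * (Real.exp (-‖x‖ ^ 2 / 4) * Real.exp (-(1/4) * ‖x‖ ^ 2))
          = ‖x‖ ^ 2 * Real.exp (-‖x‖ ^ 2 / 4) * Real.exp (-(1/4) * ‖x‖ ^ 2) := by ring
        _ ≤ 4 * Real.exp (-(1/4) * ‖x‖ ^ 2) := this
    calc ‖x‖ ^ 2 * ((2 * π) ^ (-(d:ℝ) / 2) * Real.exp (-‖x‖ ^ 2 / 2))
        = (2 * π) ^ (-(d:ℝ) / 2) * (‖x‖ ^ 2 * Real.exp (-‖x‖ ^ 2 / 2)) := by ring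
      _ ≤ (2 * π) ^ (-(d:ℝ) / 2) * (4 * Real.exp (-(1/4) * ‖x‖ ^ 2)) :=
          mul_le_mul_of_nonneg_left key h0
      _ = (2 * π) ^ (-(d:ℝ) / 2) * 4 * Real.exp (-(1/4) * ‖x‖ ^ 2) := by ring

def G2 (d : ℕ) : ℝ := ∫ x : Rd d, ‖x‖ ^ 2 * stdGauss x

lemma G2_nonneg : 0 ≤ G2 d :=
  integral_nonneg fun x => mul_nonneg (by positivity) (stdGauss_nonneg x)

/-- The mollifier kernel. -/
def ker (d : ℕ) (s : ℝ) (x : Rd d) : ℝ := (s ^ d)⁻¹ * stdGauss (s⁻¹ • x)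

lemma ker_nonneg (s : ℝ) (hs : 0 < s) (x : Rd d) : 0 ≤ ker d s x :=
  mul_nonneg (by positivity) (stdGauss_nonneg _)

lemma ker_le (s : ℝ) (hs : 0 < s) (x : Rd d) :
    ker d s x ≤ (s ^ d)⁻¹ * (2 * π) ^ (-(d : ℝ) / 2) :=
  mul_le_mul_of_nonneg_left (stdGauss_le _) (by positivity)

lemma continuous_ker (s : ℝ) : Continuous (_root_.ker d s) := by
  unfold _root_.ker
  exact continuous_const.mul (continuous_stdGauss.comp (continuous_const_smul _))

/-- Change of variables `x = y + s • z` for integrals against the kernel; holds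
unconditionally. -/
lemma integral_ker_comp (s : ℝ) (hs : 0 < s) (y : Rd d) (h : Rd d → ℝ) :
    ∫ x, h x * ker d s (x - y) = ∫ z, h (y + s • z) * stdGauss z := by
  have hsne : s ≠ 0 := ne_of_gt hs
  have e1 : (fun x : Rd d => h x * _root_.ker d s (x - y))
      = fun x => (fun u => h (y + u) * _root_.ker d s u) (x - y) := by
    funext x; simp [add_sub_cancel]
  rw [e1, integral_sub_right_eq_self (fun u => h (y + u) * _root_.ker d s u) y]
  have e2 : (fun u : Rd d => h (y + u) * _root_.ker d s u)
      = fun u => (s ^ d)⁻¹ * ((fun z => h (y + s • z) * stdGauss z) (s⁻¹ • u)) := by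
    funext u
    simp only [_root_.ker, smul_inv_smul₀ hsne]
    ring
  rw [e2, integral_const_mul,
    Measure.integral_comp_inv_smul_of_nonneg volume (fun z => h (y + s • z) * stdGauss z) hs.le,
    finrank_euclideanSpace_fin, smul_eq_mul, ← mul_assoc,
    inv_mul_cancel₀ (by positivity), one_mul]


lemma Integrable.ker_comp {d : ℕ} {s : ℝ} (hs : 0 < s) (y : Rd d) {h : Rd d → ℝ}
    (hint : Integrable (fun z => h (y + s • z) * stdGauss z)) :
    Integrable (fun x => h x * _root_.ker d s (x - y)) := by
  have hsne : s ≠ 0 := ne_of_gt hs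
  have h1 : Integrable (fun u : Rd d =>
      (s ^ d)⁻¹ * ((fun z => h (y + s • z) * stdGauss z) (s⁻¹ • u))) :=
    (((integrable_comp_smul_iff volume _ (inv_ne_zero hsne)).2 hint).const_mul _)
  have h2 : Integrable (fun u : Rd d => h (y + u) * _root_.ker d s u) := by
    refine h1.congr (Eventually.of_forall fun u => ?_)
    simp only [_root_.ker, smul_inv_smul₀ hsne]
    ring
  refine (h2.comp_sub_right y).congr (Eventually.of_forall fun x => ?_)
  simp [add_sub_cancel]

section Moll

variable {d : ℕ} {s : ℝ} (m : PM (Rd d))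

lemma mollDensity_eq (x : Rd d) :
    mollDensity s m x = ∫ y, _root_.ker d s (x - y) ∂(m : Measure (Rd d)) := rfl

lemma integrable_ker_sub (hs : 0 < s) (x : Rd d) :
    Integrable (fun y => _root_.ker d s (x - y)) (m : Measure (Rd d)) := by
  refine ⟨(((continuous_ker (d := d) s).comp (continuous_const.sub continuous_id))).aestronglyMeasurable,
    HasFiniteIntegral.of_bounded (C := (s ^ d)⁻¹ * (2 * π) ^ (-(d : ℝ) / 2))
      (Eventually.of_forall fun y => ?_)⟩
  rw [Real.norm_of_nonneg (ker_nonneg s hs _)]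
  exact ker_le s hs _

lemma mollDensity_nonneg (hs : 0 < s) (x : Rd d) : 0 ≤ mollDensity s m x :=
  integral_nonneg fun y => ker_nonneg s hs _

lemma mollDensity_le (hs : 0 < s) (x : Rd d) :
    mollDensity s m x ≤ (s ^ d)⁻¹ * (2 * π) ^ (-(d : ℝ) / 2) := by
  rw [mollDensity_eq]
  calc ∫ y, _root_.ker d s (x - y) ∂(m : Measure (Rd d))
      ≤ ∫ _y, (s ^ d)⁻¹ * (2 * π) ^ (-(d : ℝ) / 2) ∂(m : Measure (Rd d)) :=
        integral_mono (integrable_ker_sub m hs x) (integrable_const _)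
          (fun y => ker_le s hs _)
    _ = (s ^ d)⁻¹ * (2 * π) ^ (-(d : ℝ) / 2) := by simp

lemma stronglyMeasurable_mollDensity (hs : 0 < s) :
    StronglyMeasurable (mollDensity s m) := by
  have : Continuous (fun p : Rd d × Rd d => _root_.ker d s (p.1 - p.2)) :=
    (continuous_ker (d := d) s).comp (continuous_fst.sub continuous_snd)
  exact this.stronglyMeasurable.integral_prod_right'

lemma integral_ker_sub_eq_one (hs : 0 < s) (y : Rd d) :
    ∫ x, _root_.ker d s (x - y) = 1 := by
  have h := integral_ker_comp s hs y (fun _ => 1)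
  simpa [integral_stdGauss] using h

lemma integrable_ker_sub_vol (hs : 0 < s) (y : Rd d) :
    Integrable (fun x => _root_.ker d s (x - y)) := by
  have h := Integrable.ker_comp hs y (h := fun _ => 1) (by simpa using integrable_stdGauss)
  simpa using h

lemma lintegral_mollDensity (hs : 0 < s) :
    ∫⁻ x, ENNReal.ofReal (mollDensity s m x) = 1 := by
  have key : ∀ x : Rd d, ENNReal.ofReal (mollDensity s m x)
      = ∫⁻ y, ENNReal.ofReal (_root_.ker d s (x - y)) ∂(m : Measure (Rd d)) := fun x =>
    ofReal_integral_eq_lintegral_ofReal (integrable_ker_sub m hs x)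
      (Eventually.of_forall fun y => ker_nonneg s hs _)
  simp_rw [key]
  rw [lintegral_lintegral_swap]
  · have inner : ∀ y : Rd d, ∫⁻ x, ENNReal.ofReal (_root_.ker d s (x - y)) = 1 := by
      intro y
      rw [← ofReal_integral_eq_lintegral_ofReal (integrable_ker_sub_vol hs y)
        (Eventually.of_forall fun x => ker_nonneg s hs _), integral_ker_sub_eq_one hs y]
      simp
    simp_rw [inner]
    simp
  · exact (ENNReal.continuous_ofReal.comp
      ((continuous_ker (d := d) s).comp (continuous_fst.sub continuous_snd))).aemeasurable

lemma isProbability_moll (hs : 0 < s) :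
    IsProbabilityMeasure ((volume : Measure (Rd d)).withDensity
      (fun x => ENNReal.ofReal (mollDensity s m x))) := by
  constructor
  rw [withDensity_apply _ MeasurableSet.univ, setLIntegral_univ]
  exact lintegral_mollDensity m hs

lemma integrable_sq_kernel (hs : 0 < s) (y : Rd d) :
    Integrable (fun z : Rd d => ‖y + s • z‖ ^ 2 * stdGauss z) := by
  refine Integrable.mono' ((integrable_stdGauss.const_mul (2 * ‖y‖ ^ 2)).add
    (integrable_sq_stdGauss.const_mul (2 * s ^ 2))) ?_ (Eventually.of_forall fun z => ?_)
  · exact (((continuous_const.add (continuous_const_smul s)).norm.pow 2).mul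
      continuous_stdGauss).aestronglyMeasurable
  · rw [Real.norm_of_nonneg (mul_nonneg (by positivity) (stdGauss_nonneg z))]
    have hb : ‖y + s • z‖ ^ 2 ≤ 2 * ‖y‖ ^ 2 + 2 * s ^ 2 * ‖z‖ ^ 2 := by
      have h1 : ‖y + s • z‖ ≤ ‖y‖ + s * ‖z‖ := by
        calc ‖y + s • z‖ ≤ ‖y‖ + ‖s • z‖ := norm_add_le _ _
        _ = ‖y‖ + |s| * ‖z‖ := by rw [norm_smul]; rfl
        _ = ‖y‖ + s * ‖z‖ := by rw [abs_of_pos hs]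
      nlinarith [norm_nonneg (y + s • z), norm_nonneg y, norm_nonneg z, sq_nonneg (‖y‖ - s * ‖z‖)]
    calc ‖y + s • z‖ ^ 2 * stdGauss z ≤ (2 * ‖y‖ ^ 2 + 2 * s ^ 2 * ‖z‖ ^ 2) * stdGauss z :=
          mul_le_mul_of_nonneg_right hb (stdGauss_nonneg z)
      _ = 2 * ‖y‖ ^ 2 * stdGauss z + 2 * s ^ 2 * (‖z‖ ^ 2 * stdGauss z) := by ring

lemma integral_sq_ker_le (hs : 0 < s) (y : Rd d) :
    ∫ x, ‖x‖ ^ 2 * _root_.ker d s (x - y) ≤ 2 * ‖y‖ ^ 2 + 2 * s ^ 2 * G2 d := by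
  rw [integral_ker_comp s hs y (fun x => ‖x‖ ^ 2)]
  calc ∫ z, ‖y + s • z‖ ^ 2 * stdGauss z
      ≤ ∫ z, (2 * ‖y‖ ^ 2 * stdGauss z + 2 * s ^ 2 * (‖z‖ ^ 2 * stdGauss z)) := by
        refine integral_mono (integrable_sq_kernel hs y)
          ((integrable_stdGauss.const_mul _).add (integrable_sq_stdGauss.const_mul _))
          (fun z => ?_)
        have hb : ‖y + s • z‖ ^ 2 ≤ 2 * ‖y‖ ^ 2 + 2 * s ^ 2 * ‖z‖ ^ 2 := by
          have h1 : ‖y + s • z‖ ≤ ‖y‖ + s * ‖z‖ := by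
            calc ‖y + s • z‖ ≤ ‖y‖ + ‖s • z‖ := norm_add_le _ _
            _ = ‖y‖ + |s| * ‖z‖ := by rw [norm_smul]; rfl
            _ = ‖y‖ + s * ‖z‖ := by rw [abs_of_pos hs]
          nlinarith [norm_nonneg (y + s • z), norm_nonneg y, norm_nonneg z,
            sq_nonneg (‖y‖ - s * ‖z‖)]
        calc ‖y + s • z‖ ^ 2 * stdGauss z
            ≤ (2 * ‖y‖ ^ 2 + 2 * s ^ 2 * ‖z‖ ^ 2) * stdGauss z :=
              mul_le_mul_of_nonneg_right hb (stdGauss_nonneg z)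
          _ = 2 * ‖y‖ ^ 2 * stdGauss z + 2 * s ^ 2 * (‖z‖ ^ 2 * stdGauss z) := by ring
    _ = 2 * ‖y‖ ^ 2 + 2 * s ^ 2 * G2 d := by
        rw [integral_add (integrable_stdGauss.const_mul _) (integrable_sq_stdGauss.const_mul _),
          integral_const_mul, integral_const_mul, integral_stdGauss, G2]
        ring

lemma integrable_sq_ker_vol (hs : 0 < s) (y : Rd d) :
    Integrable (fun x => ‖x‖ ^ 2 * _root_.ker d s (x - y)) :=
  Integrable.ker_comp hs y (integrable_sq_kernel hs y)

/-- Second moment bound for the mollified density, together with integrability. -/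
lemma sq_mollDensity (hs : 0 < s) (hm : P2 m) :
    Integrable (fun x => ‖x‖ ^ 2 * mollDensity s m x) ∧
    ∫ x, ‖x‖ ^ 2 * mollDensity s m x
      ≤ 2 * (∫ y, ‖y‖ ^ 2 ∂(m : Measure (Rd d))) + 2 * s ^ 2 * G2 d := by
  set B : ℝ := 2 * (∫ y, ‖y‖ ^ 2 ∂(m : Measure (Rd d))) + 2 * s ^ 2 * G2 d with hB
  have hM2nn : 0 ≤ ∫ y, ‖y‖ ^ 2 ∂(m : Measure (Rd d)) := integral_nonneg fun y => by positivity
  have hG2 := G2_nonneg (d := d)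
  have hBnn : 0 ≤ B := by positivity
  have hpt : ∀ x : Rd d, ‖x‖ ^ 2 * mollDensity s m x
      = ∫ y, ‖x‖ ^ 2 * _root_.ker d s (x - y) ∂(m : Measure (Rd d)) := by
    intro x; rw [mollDensity_eq, ← integral_const_mul]
  have hle : ∫⁻ x, ENNReal.ofReal (‖x‖ ^ 2 * mollDensity s m x) ≤ ENNReal.ofReal B := by
    have key : ∀ x : Rd d, ENNReal.ofReal (‖x‖ ^ 2 * mollDensity s m x)
        = ∫⁻ y, ENNReal.ofReal (‖x‖ ^ 2 * _root_.ker d s (x - y)) ∂(m : Measure (Rd d)) := by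
      intro x
      rw [hpt x]
      exact ofReal_integral_eq_lintegral_ofReal
        ((integrable_ker_sub m hs x).const_mul _)
        (Eventually.of_forall fun y => mul_nonneg (by positivity) (ker_nonneg s hs _))
    calc ∫⁻ x, ENNReal.ofReal (‖x‖ ^ 2 * mollDensity s m x)
        = ∫⁻ y, ∫⁻ x, ENNReal.ofReal (‖x‖ ^ 2 * _root_.ker d s (x - y)) ∂(volume)
            ∂(m : Measure (Rd d)) := by
          simp_rw [key]
          exact lintegral_lintegral_swap ((ENNReal.continuous_ofReal.comp
            (((continuous_fst.norm.pow 2)).mul ((continuous_ker (d := d) s).comp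
              (continuous_fst.sub continuous_snd)))).aemeasurable)
      _ ≤ ∫⁻ y, ENNReal.ofReal (2 * ‖y‖ ^ 2 + 2 * s ^ 2 * G2 d) ∂(m : Measure (Rd d)) := by
          refine lintegral_mono fun y => ?_
          rw [← ofReal_integral_eq_lintegral_ofReal (integrable_sq_ker_vol hs y)
            (Eventually.of_forall fun x => mul_nonneg (by positivity) (ker_nonneg s hs _))]
          exact ENNReal.ofReal_le_ofReal (integral_sq_ker_le hs y)
      _ = ENNReal.ofReal B := by
          have hi : Integrable (fun y : Rd d => 2 * ‖y‖ ^ 2 + 2 * s ^ 2 * G2 d)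
              (m : Measure (Rd d)) := (hm.const_mul 2).add (integrable_const _)
          rw [← ofReal_integral_eq_lintegral_ofReal
            (f := fun y : Rd d => 2 * ‖y‖ ^ 2 + 2 * s ^ 2 * G2 d) hi
            (Eventually.of_forall fun y => by positivity)]
          congr 1
          rw [integral_add (hm.const_mul 2) (integrable_const _), integral_const_mul,
            integral_const]
          simp [hB]
  have hmeas : AEStronglyMeasurable (fun x => ‖x‖ ^ 2 * mollDensity s m x) volume :=
    ((continuous_norm.pow 2).stronglyMeasurable.mul
      (stronglyMeasurable_mollDensity m hs)).aestronglyMeasurable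
  have hnn : 0 ≤ᵐ[volume] fun x => ‖x‖ ^ 2 * mollDensity s m x :=
    Eventually.of_forall fun x => mul_nonneg (by positivity) (mollDensity_nonneg m hs x)
  have hint : Integrable (fun x => ‖x‖ ^ 2 * mollDensity s m x) := by
    refine ⟨hmeas, ?_⟩
    rw [hasFiniteIntegral_iff_ofReal hnn]
    exact lt_of_le_of_lt hle ENNReal.ofReal_lt_top
  refine ⟨hint, ?_⟩
  rw [integral_eq_lintegral_of_nonneg_ae hnn hmeas]
  exact ENNReal.toReal_le_of_le_ofReal hBnn hle

end Moll

section Potential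

variable {d : ℕ} {U : Rd d → ℝ}

lemma integrable_mollDensity {s : ℝ} (m : PM (Rd d)) (hs : 0 < s) :
    Integrable (mollDensity s m) ∧ ∫ x, mollDensity s m x = 1 := by
  have hnn : 0 ≤ᵐ[volume] mollDensity s m :=
    Eventually.of_forall fun x => mollDensity_nonneg m hs x
  have hmeas := (stronglyMeasurable_mollDensity m hs).aestronglyMeasurable (μ := volume)
  have hint : Integrable (mollDensity s m) := by
    refine ⟨hmeas, ?_⟩
    rw [hasFiniteIntegral_iff_ofReal hnn, lintegral_mollDensity m hs]
    exact ENNReal.one_lt_top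
  refine ⟨hint, ?_⟩
  rw [integral_eq_lintegral_of_nonneg_ae hnn hmeas, lintegral_mollDensity m hs]
  simp

lemma integrable_expNeg (hU : GibbsPotential U) :
    Integrable (fun x => Real.exp (-U x)) ∧ ∫ x, Real.exp (-U x) = 1 := by
  have h1 := hU.isDensity
  have : Integrable (fun x => Real.exp (-U x)) := by
    by_contra h
    rw [integral_undef h] at h1
    norm_num at h1
  exact ⟨this, h1⟩

lemma gibbs_pointwise (a : ℝ) (ha : 0 ≤ a) (u : ℝ) :
    a - Real.exp (-u) ≤ a * Real.log a + a * u := by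
  rcases eq_or_lt_of_le ha with h0 | hpos
  · rw [← h0]
    simp [Real.exp_nonneg]
  · have hg : (0:ℝ) < Real.exp (-u) := Real.exp_pos _
    have hlog := Real.log_le_sub_one_of_pos (show (0:ℝ) < Real.exp (-u) / a by positivity)
    rw [Real.log_div (ne_of_gt hg) (ne_of_gt hpos), Real.log_exp] at hlog
    have h2 := mul_le_mul_of_nonneg_left hlog (le_of_lt hpos)
    rw [mul_sub, mul_sub, mul_div_cancel₀ _ (ne_of_gt hpos)] at h2
    nlinarith

lemma density_integral {m : PM (Rd d)} {ρ : Rd d → ℝ} (hmeas : Measurable ρ)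
    (hnn : ∀ x, 0 ≤ ρ x)
    (heq : (m : Measure (Rd d))
      = (volume : Measure (Rd d)).withDensity (fun x => ENNReal.ofReal (ρ x))) :
    Integrable ρ ∧ ∫ x, ρ x = 1 := by
  have h1 : ∫⁻ x, ENNReal.ofReal (ρ x) = 1 := by
    have h := measure_univ (μ := (m : Measure (Rd d)))
    rw [heq, withDensity_apply _ MeasurableSet.univ, setLIntegral_univ] at h
    exact h
  have hnn' : 0 ≤ᵐ[volume] ρ := Eventually.of_forall hnn
  have hmeas' := hmeas.aestronglyMeasurable (μ := (volume : Measure (Rd d)))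
  have hint : Integrable ρ := by
    refine ⟨hmeas', ?_⟩
    rw [hasFiniteIntegral_iff_ofReal hnn', h1]
    exact ENNReal.one_lt_top
  refine ⟨hint, ?_⟩
  rw [integral_eq_lintegral_of_nonneg_ae hnn' hmeas', h1]
  simp

lemma entPred_integral_nonneg (hU : GibbsPotential U) {m : PM (Rd d)} {ρ : Rd d → ℝ}
    (h : EntPred U m ρ) : 0 ≤ ∫ x, (ρ x * Real.log (ρ x) + ρ x * U x) := by
  obtain ⟨hmeas, hnn, heq, hint⟩ := h
  obtain ⟨hρint, hρ1⟩ := density_integral hmeas hnn heq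
  obtain ⟨hgint, hg1⟩ := integrable_expNeg hU
  have hmono : ∫ x, (ρ x - Real.exp (-U x))
      ≤ ∫ x, (ρ x * Real.log (ρ x) + ρ x * U x) :=
    integral_mono (hρint.sub hgint) hint (fun x => gibbs_pointwise (ρ x) (hnn x) (U x))
  rw [integral_sub hρint hgint, hρ1, hg1] at hmono
  linarith

lemma relEnt_eq {m : PM (Rd d)} {ρ : Rd d → ℝ} (h : EntPred U m ρ) :
    relEnt U m = ((∫ x, (ρ x * Real.log (ρ x) + ρ x * U x) : ℝ) : EReal) := by
  have hex : ∃ ρ', EntPred U m ρ' := ⟨ρ, h⟩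
  unfold relEnt
  rw [dif_pos hex]
  obtain ⟨hmeas1, hnn1, heq1, hint1⟩ := hex.choose_spec
  obtain ⟨hmeas, hnn, heq, hint⟩ := h
  have hwd : (volume : Measure (Rd d)).withDensity (fun x => ENNReal.ofReal (hex.choose x))
      = (volume : Measure (Rd d)).withDensity (fun x => ENNReal.ofReal (ρ x)) := by
    rw [← heq1, ← heq]
  have hae0 : (fun x => ENNReal.ofReal (hex.choose x)) =ᵐ[volume]
      (fun x => ENNReal.ofReal (ρ x)) :=
    (withDensity_eq_iff_of_sigmaFinite hmeas1.ennreal_ofReal.aemeasurable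
      hmeas.ennreal_ofReal.aemeasurable).1 hwd
  have hae : hex.choose =ᵐ[volume] ρ := hae0.mono fun x hx => by
    rwa [ENNReal.ofReal_eq_ofReal_iff (hnn1 x) (hnn x)] at hx
  norm_cast
  exact integral_congr_ae (hae.mono fun x hx => by simp only []; rw [hx])

lemma relEnt_nonneg (hU : GibbsPotential U) (m : PM (Rd d)) : (0 : EReal) ≤ relEnt U m := by
  unfold relEnt
  split_ifs with h
  · exact_mod_cast entPred_integral_nonneg hU h.choose_spec
  · exact le_top

lemma U_upper (hU : GibbsPotential U) : ∃ A B : ℝ, 0 ≤ B ∧ ∀ x, U x ≤ A + B * ‖x‖ ^ 2 := by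
  obtain ⟨K, hK⟩ := hU.lipGrad
  have hdiff : Differentiable ℝ U := hU.smooth.differentiable (by simp)
  have hgradnorm : ∀ y : Rd d, ‖fderiv ℝ U y‖ = ‖gradient U y‖ := by
    intro y
    rw [gradient, LinearIsometryEquiv.norm_map]
  set C0 : ℝ := ‖gradient U 0‖
  have hgrad_le : ∀ x : Rd d, ∀ y ∈ Metric.closedBall (0 : Rd d) ‖x‖,
      ‖fderiv ℝ U y‖ ≤ C0 + K * ‖x‖ := by
    intro x y hy
    rw [hgradnorm]
    have h1 : ‖gradient U y - gradient U 0‖ ≤ K * ‖y‖ := by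
      have := hK.dist_le_mul y 0
      simpa [dist_eq_norm] using this
    have h2 : ‖y‖ ≤ ‖x‖ := by simpa [Metric.mem_closedBall, dist_eq_norm] using hy
    calc ‖gradient U y‖ ≤ ‖gradient U 0‖ + ‖gradient U y - gradient U 0‖ := by
          have := norm_add_le (gradient U 0) (gradient U y - gradient U 0)
          simpa using this
      _ ≤ C0 + K * ‖x‖ := by
          have : (K : ℝ) * ‖y‖ ≤ (K : ℝ) * ‖x‖ :=
            mul_le_mul_of_nonneg_left h2 (by positivity)
          have hKy := le_trans h1 this
          exact add_le_add le_rfl hKy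
  have hmv : ∀ x : Rd d, ‖U x - U 0‖ ≤ (C0 + K * ‖x‖) * ‖x‖ := by
    intro x
    have := (convex_closedBall (0 : Rd d) ‖x‖).norm_image_sub_le_of_norm_fderiv_le
      (fun y _ => hdiff y) (hgrad_le x) (Metric.mem_closedBall_self (norm_nonneg x))
      (show x ∈ Metric.closedBall (0 : Rd d) ‖x‖ by
        simp [Metric.mem_closedBall, dist_eq_norm])
    simpa using this
  refine ⟨|U 0| + C0, C0 + K, by positivity, fun x => ?_⟩
  have h3 := hmv x
  rw [Real.norm_eq_abs] at h3
  have h4 : U x - U 0 ≤ (C0 + K * ‖x‖) * ‖x‖ := le_trans (le_abs_self _) h3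
  have h5 : ‖x‖ ≤ 1 + ‖x‖ ^ 2 := by nlinarith [sq_nonneg (‖x‖ - 1)]
  have hC0 : 0 ≤ C0 := norm_nonneg _
  nlinarith [norm_nonneg x, sq_nonneg (‖x‖), le_abs_self (U 0), neg_abs_le (U 0),
    mul_le_mul_of_nonneg_left h5 hC0]

end Potential

section EntBound

lemma moll_entropy_bound {d : ℕ} {U : Rd d → ℝ} (hU : GibbsPotential U) {s : ℝ} (hs : 0 < s)
    (m : PM (Rd d)) (hm : P2 m) {A B : ℝ} (hBnn : 0 ≤ B) (hAB : ∀ x, U x ≤ A + B * ‖x‖ ^ 2) :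
    Integrable (fun x => mollDensity s m x * Real.log (mollDensity s m x)
      + mollDensity s m x * U x) ∧
    ∫ x, (mollDensity s m x * Real.log (mollDensity s m x) + mollDensity s m x * U x)
      ≤ Real.log ((s ^ d)⁻¹ * (2 * π) ^ (-(d : ℝ) / 2)) + A
        + B * (2 * (∫ y, ‖y‖ ^ 2 ∂(m : Measure (Rd d))) + 2 * s ^ 2 * G2 d) := by
  have hπ := Real.pi_pos
  set ρ := mollDensity s m with hρdef
  set C : ℝ := (s ^ d)⁻¹ * (2 * π) ^ (-(d : ℝ) / 2) with hC
  have hCpos : 0 < C :=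
    mul_pos (by positivity) (Real.rpow_pos_of_pos (by positivity) _)
  obtain ⟨hsq, hsqle⟩ := sq_mollDensity m hs hm
  obtain ⟨hρint, hρ1⟩ := integrable_mollDensity m hs
  obtain ⟨hgint, hg1⟩ := integrable_expNeg hU
  set u : Rd d → ℝ := fun x => (Real.log C + A) * ρ x + B * (‖x‖ ^ 2 * ρ x) with hu
  have huint : Integrable u := (hρint.const_mul _).add (hsq.const_mul _)
  have hup : ∀ x, ρ x * Real.log (ρ x) + ρ x * U x ≤ u x := by
    intro x
    have h1 : ρ x * Real.log (ρ x) ≤ ρ x * Real.log C := by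
      rcases eq_or_lt_of_le (mollDensity_nonneg m hs x) with h0 | hpos
      · have hz : ρ x = 0 := h0.symm
        rw [hz]
        simp
      · exact mul_le_mul_of_nonneg_left
          (Real.log_le_log hpos (mollDensity_le m hs x)) (le_of_lt hpos)
    have h2 : ρ x * U x ≤ ρ x * (A + B * ‖x‖ ^ 2) :=
      mul_le_mul_of_nonneg_left (hAB x) (mollDensity_nonneg m hs x)
    calc ρ x * Real.log (ρ x) + ρ x * U x
        ≤ ρ x * Real.log C + ρ x * (A + B * ‖x‖ ^ 2) := add_le_add h1 h2
      _ = u x := by rw [hu]; ring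
  set l : Rd d → ℝ := fun x => ρ x - Real.exp (-U x) with hl
  have hlint : Integrable l := hρint.sub hgint
  have hlow : ∀ x, l x ≤ ρ x * Real.log (ρ x) + ρ x * U x := fun x =>
    gibbs_pointwise (ρ x) (mollDensity_nonneg m hs x) (U x)
  have hρm := stronglyMeasurable_mollDensity m hs
  have hfm : AEStronglyMeasurable
      (fun x => ρ x * Real.log (ρ x) + ρ x * U x) (volume : Measure (Rd d)) := by
    refine StronglyMeasurable.aestronglyMeasurable ?_
    exact (hρm.mul ((Real.measurable_log.comp hρm.measurable).stronglyMeasurable)).add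
      (hρm.mul hU.smooth.continuous.stronglyMeasurable)
  have hint : Integrable (fun x => ρ x * Real.log (ρ x) + ρ x * U x) := by
    refine Integrable.mono' (huint.abs.add hlint.abs) hfm (Eventually.of_forall fun x => ?_)
    rw [Real.norm_eq_abs, abs_le]
    constructor
    · have h3 := hlow x
      have h4 := neg_abs_le (l x)
      have h5 := abs_nonneg (u x)
      simp only [Pi.add_apply, Pi.abs_apply]
      linarith
    · have h3 := hup x
      have h4 := le_abs_self (u x)
      have h5 := abs_nonneg (l x)
      simp only [Pi.add_apply, Pi.abs_apply]
      linarith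
  refine ⟨hint, ?_⟩
  calc ∫ x, (ρ x * Real.log (ρ x) + ρ x * U x)
      ≤ ∫ x, u x := integral_mono hint huint hup
    _ = (Real.log C + A) * 1 + B * ∫ x, ‖x‖ ^ 2 * ρ x := by
        rw [hu]
        rw [integral_add (hρint.const_mul _) (hsq.const_mul _), integral_const_mul,
          integral_const_mul, hρ1]
    _ ≤ Real.log C + A
        + B * (2 * (∫ y, ‖y‖ ^ 2 ∂(m : Measure (Rd d))) + 2 * s ^ 2 * G2 d) := by
        have := mul_le_mul_of_nonneg_left hsqle hBnn
        linarith

end EntBound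

section WeakConv

open scoped BoundedContinuousFunction

variable {d : ℕ}

lemma integral_phi_moll (φ : Rd d →ᵇ ℝ) {s : ℝ} (hs : 0 < s) (m : PM (Rd d)) :
    ∫ x, φ x ∂((volume : Measure (Rd d)).withDensity
        fun x => ENNReal.ofReal (mollDensity s m x))
      = ∫ y, (∫ z, φ (y + s • z) * stdGauss z) ∂(m : Measure (Rd d)) := by
  have hmeasρ := (stronglyMeasurable_mollDensity m hs).measurable
  have ha : ∫ x, φ x ∂((volume : Measure (Rd d)).withDensity
      fun x => ENNReal.ofReal (mollDensity s m x)) = ∫ x, mollDensity s m x * φ x := by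
    have h := integral_withDensity_eq_integral_smul (μ := (volume : Measure (Rd d)))
      (f := fun x => (mollDensity s m x).toNNReal) hmeasρ.real_toNNReal (fun x => φ x)
    rw [show ((volume : Measure (Rd d)).withDensity fun x => ENNReal.ofReal (mollDensity s m x))
      = ((volume : Measure (Rd d)).withDensity
        fun x => ((mollDensity s m x).toNNReal : ℝ≥0∞)) from rfl, h]
    congr 1
    funext x
    rw [NNReal.smul_def, Real.coe_toNNReal _ (mollDensity_nonneg m hs x), smul_eq_mul]
  have hcont : Continuous fun p : Rd d × Rd d => φ p.1 * _root_.ker d s (p.1 - p.2) :=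
    (φ.continuous.comp continuous_fst).mul
      ((continuous_ker (d := d) s).comp (continuous_fst.sub continuous_snd))
  have hkerprod : ∫⁻ p : Rd d × Rd d, ENNReal.ofReal (_root_.ker d s (p.1 - p.2))
      ∂((volume : Measure (Rd d)).prod (m : Measure (Rd d))) = 1 := by
    rw [lintegral_prod (fun p : Rd d × Rd d => ENNReal.ofReal (_root_.ker d s (p.1 - p.2)))
      (Continuous.aemeasurable (ENNReal.continuous_ofReal.comp
        (((continuous_ker (d := d) s).comp (continuous_fst.sub continuous_snd)) :
          Continuous fun p : Rd d × Rd d => _root_.ker d s (p.1 - p.2))))]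
    have key : ∀ x : Rd d, ∫⁻ y, ENNReal.ofReal (_root_.ker d s (x - y)) ∂(m : Measure (Rd d))
        = ENNReal.ofReal (mollDensity s m x) := fun x =>
      (ofReal_integral_eq_lintegral_ofReal (integrable_ker_sub m hs x)
        (Eventually.of_forall fun y => ker_nonneg s hs _)).symm
    simp_rw [key]
    exact lintegral_mollDensity m hs
  have hprod : Integrable (Function.uncurry fun x y => φ x * _root_.ker d s (x - y))
      ((volume : Measure (Rd d)).prod (m : Measure (Rd d))) := by
    refine ⟨hcont.aestronglyMeasurable, ?_⟩
    show (∫⁻ p, ‖φ p.1 * _root_.ker d s (p.1 - p.2)‖₊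
      ∂((volume : Measure (Rd d)).prod (m : Measure (Rd d)))) < ⊤
    calc ∫⁻ p, ‖φ p.1 * _root_.ker d s (p.1 - p.2)‖₊
          ∂((volume : Measure (Rd d)).prod (m : Measure (Rd d)))
        ≤ ∫⁻ p, ENNReal.ofReal ‖φ‖ * ENNReal.ofReal (_root_.ker d s (p.1 - p.2))
          ∂((volume : Measure (Rd d)).prod (m : Measure (Rd d))) := by
          refine lintegral_mono fun p => ?_
          rw [← ENNReal.ofReal_mul (norm_nonneg φ), ← enorm_eq_nnnorm, Real.enorm_eq_ofReal_abs]
          refine ENNReal.ofReal_le_ofReal ?_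
          rw [abs_mul, abs_of_nonneg (ker_nonneg s hs _)]
          exact mul_le_mul_of_nonneg_right (φ.norm_coe_le_norm p.1) (ker_nonneg s hs _)
      _ = ENNReal.ofReal ‖φ‖ := by
          rw [lintegral_const_mul _ (show Measurable
              (fun p : Rd d × Rd d => ENNReal.ofReal (_root_.ker d s (p.1 - p.2))) from
            (ENNReal.continuous_ofReal.comp (((continuous_ker (d := d) s).comp
              (continuous_fst.sub continuous_snd)) :
              Continuous fun p : Rd d × Rd d => _root_.ker d s (p.1 - p.2))).measurable),
            hkerprod, mul_one]
      _ < ⊤ := ENNReal.ofReal_lt_top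
  have hx : ∀ x : Rd d, mollDensity s m x * φ x
      = ∫ y, φ x * _root_.ker d s (x - y) ∂(m : Measure (Rd d)) := by
    intro x
    rw [integral_const_mul, mollDensity_eq]
    ring
  rw [ha]
  simp_rw [hx]
  rw [integral_integral_swap hprod]
  exact integral_congr_ae (Eventually.of_forall fun y => integral_ker_comp s hs y (fun x => φ x))

lemma integrable_phi_gauss (φ : Rd d →ᵇ ℝ) (t : ℝ) (y : Rd d) :
    Integrable (fun z : Rd d => φ (y + t • z) * stdGauss z) := by
  refine Integrable.mono' (integrable_stdGauss.const_mul ‖φ‖)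
    ((φ.continuous.comp (continuous_const.add
      (continuous_const_smul t))).mul continuous_stdGauss).aestronglyMeasurable
    (Eventually.of_forall fun z => ?_)
  rw [norm_mul, Real.norm_of_nonneg (stdGauss_nonneg z)]
  exact mul_le_mul_of_nonneg_right (φ.norm_coe_le_norm _) (stdGauss_nonneg z)

lemma tendsto_moll_PM (m : PM (Rd d)) (σ : ℕ → ℝ) (hσpos : ∀ n, 0 < σ n)
    (hσlim : Tendsto σ atTop (𝓝 0)) (ms : ℕ → PM (Rd d))
    (hms : ∀ n, (ms n : Measure (Rd d)) = (volume : Measure (Rd d)).withDensity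
      fun x => ENNReal.ofReal (mollDensity (σ n) m x)) :
    Tendsto ms atTop (𝓝 m) := by
  rw [ProbabilityMeasure.tendsto_iff_forall_integral_tendsto]
  intro φ
  have hrw : ∀ n, ∫ x, φ x ∂(ms n : Measure (Rd d))
      = ∫ y, (∫ z, φ (y + σ n • z) * stdGauss z) ∂(m : Measure (Rd d)) := by
    intro n
    rw [hms n]
    exact integral_phi_moll φ (hσpos n) m
  simp_rw [hrw]
  refine tendsto_integral_of_dominated_convergence (fun _ => ‖φ‖) (fun n => ?_)
    (integrable_const _) (fun n => Eventually.of_forall fun y => ?_)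
    (Eventually.of_forall fun y => ?_)
  · -- measurability
    have hc : Continuous fun p : Rd d × Rd d => φ (p.1 + σ n • p.2) * stdGauss p.2 :=
      (φ.continuous.comp (continuous_fst.add (continuous_snd.const_smul (σ n)))).mul
        (continuous_stdGauss.comp continuous_snd)
    exact hc.stronglyMeasurable.integral_prod_right'.aestronglyMeasurable
  · -- bound
    calc ‖∫ z, φ (y + σ n • z) * stdGauss z‖
        ≤ ∫ z, ‖φ (y + σ n • z) * stdGauss z‖ := norm_integral_le_integral_norm _
      _ ≤ ∫ z, ‖φ‖ * stdGauss z := by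
          refine integral_mono (integrable_phi_gauss φ _ y).norm
            (integrable_stdGauss.const_mul _) (fun z => ?_)
          rw [norm_mul, Real.norm_of_nonneg (stdGauss_nonneg z)]
          exact mul_le_mul_of_nonneg_right (φ.norm_coe_le_norm _) (stdGauss_nonneg z)
      _ = ‖φ‖ := by rw [integral_const_mul, integral_stdGauss, mul_one]
  · -- pointwise limit
    have hφy : ∫ z : Rd d, φ y * stdGauss z = φ y := by
      rw [integral_const_mul, integral_stdGauss, mul_one]
    rw [show (φ y : ℝ) = ∫ z : Rd d, φ y * stdGauss z from hφy.symm]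
    refine tendsto_integral_of_dominated_convergence (fun z => ‖φ‖ * stdGauss z)
      (fun n => (integrable_phi_gauss φ _ y).aestronglyMeasurable)
      (integrable_stdGauss.const_mul _)
      (fun n => Eventually.of_forall fun z => ?_) (Eventually.of_forall fun z => ?_)
    · rw [norm_mul, Real.norm_of_nonneg (stdGauss_nonneg z)]
      exact mul_le_mul_of_nonneg_right (φ.norm_coe_le_norm _) (stdGauss_nonneg z)
    · have harg : Tendsto (fun n => y + σ n • z) atTop (𝓝 y) := by
        have h1 : Tendsto (fun n => σ n • z) atTop (𝓝 ((0:ℝ) • z)) := hσlim.smul_const z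
        rw [zero_smul] at h1
        have := tendsto_const_nhds (x := y) (f := atTop (α := ℕ)) |>.add h1
        simpa using this
      exact ((φ.continuous.tendsto y).comp harg).mul tendsto_const_nhds

end WeakConv




end Helpers

/-- **Γ-convergence of the free energies `V^{σ_n}` to `F` as `σ_n ↓ 0`.** -/
theorem gammaConvergence_freeEnergy {d : ℕ}
    (F : PM (Rd d) → ℝ) (DF : PM (Rd d) → Rd d → ℝ) (U : Rd d → ℝ)
    (hU : GibbsPotential U) (hC1 : IsC1 F DF) (hConv : ConvexPM F)
    (hBddBelow : BddBelow (Set.range F)) (hFcont : Continuous F)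
    (σ : ℕ → ℝ) (hσpos : ∀ n, 0 < σ n) (hσanti : StrictAnti σ)
    (hσlim : Tendsto σ atTop (𝓝 0)) :
    -- (i) liminf inequality
    (∀ m : PM (Rd d), P2 m → ∀ ms : ℕ → PM (Rd d), (∀ n, P2 (ms n)) →
      Tendsto ms atTop (𝓝 m) →
      (F m : EReal) ≤ liminf (fun n => freeEnergy (σ n) U F (ms n)) atTop) ∧
    -- (ii) recovery sequence: the mollified measures
    (∀ m : PM (Rd d), P2 m →
      ∃ ms : ℕ → PM (Rd d),
        (∀ n, (ms n : Measure (Rd d)) =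
          (volume : Measure (Rd d)).withDensity fun x => ENNReal.ofReal (mollDensity (σ n) m x)) ∧
        Tendsto ms atTop (𝓝 m) ∧
        limsup (fun n => freeEnergy (σ n) U F (ms n)) atTop ≤ (F m : EReal)) := by
  constructor
  · -- (i) liminf inequality
    intro m hm ms hmsP2 hconv
    have hFt : Tendsto (fun n => ((F (ms n) : ℝ) : EReal)) atTop (𝓝 ((F m : ℝ) : EReal)) :=
      (continuous_coe_real_ereal.tendsto _).comp ((hFcont.tendsto m).comp hconv)
    rw [← hFt.liminf_eq]
    refine liminf_le_liminf (Eventually.of_forall fun n => ?_)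
    show ((F (ms n) : ℝ) : EReal) ≤ freeEnergy (σ n) U F (ms n)
    unfold freeEnergy
    refine le_add_of_nonneg_right ?_
    have hc : (0 : EReal) < ((σ n ^ 2 / 2 : ℝ) : EReal) := by
      have h1 : (0:ℝ) < σ n ^ 2 / 2 := div_pos (pow_pos (hσpos n) 2) two_pos
      exact_mod_cast h1
    rcases eq_or_lt_of_le (relEnt_nonneg hU (ms n)) with h | h
    · rw [← h, mul_zero]
    · exact le_of_lt (EReal.mul_pos hc h)
  · -- (ii) recovery sequence
    intro m hm
    obtain ⟨A, B, hBnn, hAB⟩ := U_upper hU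
    set M2 : ℝ := ∫ y, ‖y‖ ^ 2 ∂(m : Measure (Rd d)) with hM2
    let msn : ℕ → PM (Rd d) := fun n =>
      ⟨(volume : Measure (Rd d)).withDensity fun x => ENNReal.ofReal (mollDensity (σ n) m x),
        isProbability_moll m (hσpos n)⟩
    have hcoe : ∀ n, (msn n : Measure (Rd d)) = (volume : Measure (Rd d)).withDensity
        fun x => ENNReal.ofReal (mollDensity (σ n) m x) := fun n => rfl
    have hconv : Tendsto msn atTop (𝓝 m) := tendsto_moll_PM m σ hσpos hσlim msn hcoe
    refine ⟨msn, hcoe, hconv, ?_⟩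
    have hEB := fun n => moll_entropy_bound hU (hσpos n) m hm hBnn hAB
    have hEnt : ∀ n, EntPred U (msn n) (mollDensity (σ n) m) := fun n =>
      ⟨(stronglyMeasurable_mollDensity m (hσpos n)).measurable,
       fun x => mollDensity_nonneg m (hσpos n) x, rfl, (hEB n).1⟩
    set hseq : ℕ → ℝ := fun n => ∫ x, (mollDensity (σ n) m x
      * Real.log (mollDensity (σ n) m x) + mollDensity (σ n) m x * U x) with hhseq
    have hrel : ∀ n, relEnt U (msn n) = ((hseq n : ℝ) : EReal) := fun n => relEnt_eq (hEnt n)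
    have h0 : ∀ n, 0 ≤ hseq n := fun n => entPred_integral_nonneg hU (hEnt n)
    have hub : ∀ n, hseq n ≤ Real.log ((σ n ^ d)⁻¹ * (2 * π) ^ (-(d : ℝ) / 2)) + A
        + B * (2 * M2 + 2 * σ n ^ 2 * G2 d) := fun n => (hEB n).2
    have hσ0' : Tendsto σ atTop (𝓝[>] (0:ℝ)) :=
      tendsto_nhdsWithin_iff.2 ⟨hσlim, Eventually.of_forall fun n => hσpos n⟩
    have T1 : Tendsto (fun n => Real.log (σ n) * σ n ^ 2) atTop (𝓝 0) := by
      have h := (tendsto_log_mul_rpow_nhdsGT_zero (r := 2) two_pos).comp hσ0'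
      refine h.congr fun n => ?_
      simp only [Function.comp_apply, Real.rpow_two]
    have T2 : Tendsto (fun n => σ n ^ 2) atTop (𝓝 (0:ℝ)) := by
      have h := ((continuous_pow 2).tendsto (0:ℝ)).comp hσlim
      simpa [Function.comp_def] using h
    set K1 : ℝ := (Real.log ((2 * π) ^ (-(d : ℝ) / 2)) + A + 2 * B * M2) / 2 with hK1
    have hgbnd : ∀ n, (σ n ^ 2 / 2) * (Real.log ((σ n ^ d)⁻¹ * (2 * π) ^ (-(d:ℝ)/2)) + A
        + B * (2 * M2 + 2 * σ n ^ 2 * G2 d))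
        = (-(d : ℝ) / 2) * (Real.log (σ n) * σ n ^ 2) + K1 * σ n ^ 2
          + (B * G2 d) * (σ n ^ 2 * σ n ^ 2) := by
      intro n
      have hπ := Real.pi_pos
      have hσn := hσpos n
      rw [Real.log_mul (by positivity) (ne_of_gt (Real.rpow_pos_of_pos (by positivity) _)),
        Real.log_inv, Real.log_pow, hK1]
      ring
    have hcb : Tendsto (fun n => (σ n ^ 2 / 2)
        * (Real.log ((σ n ^ d)⁻¹ * (2 * π) ^ (-(d:ℝ)/2)) + A
          + B * (2 * M2 + 2 * σ n ^ 2 * G2 d))) atTop (𝓝 0) := by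
      have h := ((T1.const_mul (-(d:ℝ)/2)).add (T2.const_mul K1)).add
        ((T2.mul T2).const_mul (B * G2 d))
      have h' : Tendsto (fun n => (-(d : ℝ) / 2) * (Real.log (σ n) * σ n ^ 2) + K1 * σ n ^ 2
          + (B * G2 d) * (σ n ^ 2 * σ n ^ 2)) atTop (𝓝 0) := by simpa using h
      exact h'.congr fun n => (hgbnd n).symm
    have hch : Tendsto (fun n => (σ n ^ 2 / 2) * hseq n) atTop (𝓝 0) := by
      refine squeeze_zero (fun n => mul_nonneg (by positivity) (h0 n))
        (fun n => mul_le_mul_of_nonneg_left (hub n) (by positivity)) hcb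
    have hFt : Tendsto (fun n => F (msn n)) atTop (𝓝 (F m)) := (hFcont.tendsto m).comp hconv
    have hsum : Tendsto (fun n => F (msn n) + (σ n ^ 2 / 2) * hseq n) atTop (𝓝 (F m)) := by
      have h := hFt.add hch
      simpa using h
    have hfe : ∀ n, freeEnergy (σ n) U F (msn n)
        = ((F (msn n) + (σ n ^ 2 / 2) * hseq n : ℝ) : EReal) := by
      intro n
      unfold freeEnergy
      rw [hrel n, ← EReal.coe_mul, ← EReal.coe_add]
    simp_rw [hfe]
    have hlim : Tendsto (fun n => ((F (msn n) + (σ n ^ 2 / 2) * hseq n : ℝ) : EReal)) atTop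
        (𝓝 ((F m : ℝ) : EReal)) := (continuous_coe_real_ereal.tendsto _).comp hsum
    rw [hlim.limsup_eq]

end
end

section
/- For every Borel probability measure m on ℝ^d and every probability density f on ℝ^d, the convolution density (m*f)(x) = ∫ f(x−y) m(dy) satisfies ∫_{ℝ^d} h((m*f)(x)) dx ≤ ∫_{ℝ^d} h(f(x)) dx, where h(u) = u log u and both integrals are valued in (−∞, +∞]. In particular, for σ > 0 and f_σ(x) = σ^{−d} f(x/σ), one has ∫_{ℝ^d} h((m*f_σ)(x)) dx ≤ ∫_{ℝ^d} h(f(x)) dx − d log σ. -/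
open MeasureTheory Real Filter Topology
open scoped ENNReal NNReal RealInnerProductSpace

noncomputable section

/-- `h(u) = u log u`. -/
def hfun (u : ℝ) : ℝ := u * Real.log u

/-- The integral `∫ φ dx`, valued in `(-∞, +∞]` (computed as the difference of the
lower integrals of the positive and negative parts). -/
def eInt {d : ℕ} (φ : Rd d → ℝ) : EReal :=
  ((∫⁻ x, ENNReal.ofReal (φ x) : ℝ≥0∞) : EReal)
    - ((∫⁻ x, ENNReal.ofReal (-φ x) : ℝ≥0∞) : EReal)

lemma hfun_zero : hfun 0 = 0 := by simp [hfun]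

lemma key_log_ineq {u c : ℝ} (hu : 0 ≤ u) (hc : 0 < c) :
    u - c ≤ u * Real.log u - u * Real.log c := by
  rcases eq_or_lt_of_le hu with h | h
  · rw [← h]; simp; linarith
  · have h1 := Real.log_le_sub_one_of_pos (div_pos hc h)
    rw [Real.log_div hc.ne' h.ne'] at h1
    have h2 : u * (Real.log c - Real.log u) ≤ u * (c / u - 1) :=
      mul_le_mul_of_nonneg_left h1 hu
    have h3 : u * (c / u) = c := by field_simp
    nlinarith

lemma jensen_tangent {u c : ℝ} (hu : 0 ≤ u) (hc : 0 < c) :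
    hfun c + (Real.log c + 1) * (u - c) ≤ hfun u := by
  have k := key_log_ineq hu hc
  have e : (Real.log c + 1) * (u - c)
      = u * Real.log c - c * Real.log c + u - c := by ring
  unfold hfun
  linarith

lemma neg_tangent {u c : ℝ} (hu : 0 ≤ u) (hc : 0 < c) :
    max (-hfun u) 0 ≤ max (-hfun c) 0 + u
      + (if c ≤ 1 then -Real.log c - 1 else -1) * (u - c) := by
  have k := key_log_ineq hu hc
  have k1 := key_log_ineq hu one_pos
  rw [Real.log_one] at k1
  by_cases h1 : c ≤ 1
  · rw [if_pos h1]
    have hlogc : Real.log c ≤ 0 := Real.log_nonpos hc.le h1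
    have hfc : hfun c ≤ 0 := mul_nonpos_of_nonneg_of_nonpos hc.le hlogc
    rw [max_eq_left (neg_nonneg.2 hfc)]
    by_cases h2 : u ≤ 1
    · have hfu : hfun u ≤ 0 := mul_nonpos_of_nonneg_of_nonpos hu (Real.log_nonpos hu h2)
      rw [max_eq_left (neg_nonneg.2 hfu)]
      have e : (-Real.log c - 1) * (u - c)
          = -(u * Real.log c) + c * Real.log c - u + c := by ring
      unfold hfun at *
      linarith
    · push_neg at h2
      have hfu : 0 ≤ hfun u := mul_nonneg hu (Real.log_nonneg h2.le)
      rw [max_eq_right (neg_nonpos.2 hfu)]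
      have h3 : 0 ≤ (-Real.log c) * (u - c) :=
        mul_nonneg (by linarith) (by linarith)
      have e : (-Real.log c - 1) * (u - c) = (-Real.log c) * (u - c) - u + c := by ring
      unfold hfun at *
      linarith
  · push_neg at h1
    rw [if_neg (not_le.2 h1)]
    have hfc : 0 ≤ hfun c := mul_nonneg hc.le (Real.log_nonneg h1.le)
    rw [max_eq_right (neg_nonpos.2 hfc)]
    have : -hfun u ≤ 1 - u := by unfold hfun at *; linarith
    have h0 : max (-hfun u) 0 ≤ 1 := max_le (by linarith) zero_le_one
    linarith [h0]

lemma ofReal_max_zero (t : ℝ) : ENNReal.ofReal (max t 0) = ENNReal.ofReal t := by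
  rcases le_total t 0 with h | h
  · rw [max_eq_right h, ENNReal.ofReal_zero, ENNReal.ofReal_of_nonpos h]
  · rw [max_eq_left h]

lemma jensen_integral {α : Type*} [MeasurableSpace α] (μ : Measure α) [IsProbabilityMeasure μ]
    {k : α → ℝ} (hk0 : ∀ y, 0 ≤ k y) (hki : Integrable k μ)
    (hhi : Integrable (fun y => hfun (k y)) μ) :
    hfun (∫ y, k y ∂μ) ≤ ∫ y, hfun (k y) ∂μ := by
  set c := ∫ y, k y ∂μ with hc
  have hc0 : 0 ≤ c := integral_nonneg hk0
  rcases eq_or_lt_of_le hc0 with h | h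
  · have hz : k =ᵐ[μ] 0 := (integral_eq_zero_iff_of_nonneg hk0 hki).1 h.symm
    have : (fun y => hfun (k y)) =ᵐ[μ] (fun _ => (0 : ℝ)) := by
      filter_upwards [hz] with y hy
      simp [hy, hfun]
    rw [integral_congr_ae this, integral_const, ← h]
    simp [hfun]
  · have hle : ∀ y, hfun c + (Real.log c + 1) * (k y - c) ≤ hfun (k y) :=
      fun y => jensen_tangent (hk0 y) h
    have hint : Integrable (fun y => hfun c + (Real.log c + 1) * (k y - c)) μ :=
      (integrable_const _).add (((hki.sub (integrable_const c)).const_mul _))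
    have hint2 : Integrable (fun a => (Real.log c + 1) * (k a - c)) μ := by
      exact (hki.sub (integrable_const c)).const_mul _
    have hmono := integral_mono hint hhi hle
    have e1 : ∫ a, (hfun c + (Real.log c + 1) * (k a - c)) ∂μ = hfun c := by
      rw [integral_add (integrable_const _) hint2, integral_const_mul,
        integral_sub hki (integrable_const c), integral_const, integral_const, probReal_univ]
      simp [← hc]
    rwa [e1] at hmono

lemma psi_le {α : Type*} [MeasurableSpace α] (μ : Measure α) [IsProbabilityMeasure μ]
    {k : α → ℝ} (hk : Measurable k) (hk0 : ∀ y, 0 ≤ k y)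
    (hG : ∫⁻ y, ENNReal.ofReal (k y) ∂μ ≠ ⊤) :
    ∫⁻ y, ENNReal.ofReal (-hfun (k y)) ∂μ ≤
      ENNReal.ofReal (-hfun ((∫⁻ y, ENNReal.ofReal (k y) ∂μ).toReal))
        + ∫⁻ y, ENNReal.ofReal (k y) ∂μ := by
  set G := ∫⁻ y, ENNReal.ofReal (k y) ∂μ with hGdef
  set c := G.toReal with hcdef
  have hc0 : 0 ≤ c := ENNReal.toReal_nonneg
  rcases eq_or_lt_of_le hc0 with h | h
  · have hG0 : G = 0 := by
      rcases (ENNReal.toReal_eq_zero_iff G).1 h.symm with h' | h'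
      · exact h'
      · exact absurd h' hG
    have hz : ∀ᵐ y ∂μ, ENNReal.ofReal (k y) = 0 :=
      (lintegral_eq_zero_iff (ENNReal.measurable_ofReal.comp hk)).1 hG0
    have hzz : (fun y => ENNReal.ofReal (-hfun (k y))) =ᵐ[μ] (fun _ => (0:ℝ≥0∞)) := by
      filter_upwards [hz] with y hy
      have : k y = 0 := le_antisymm (by simpa using (ENNReal.ofReal_eq_zero.1 hy)) (hk0 y)
      simp [this, hfun]
    rw [lintegral_congr_ae hzz, lintegral_zero]
    exact zero_le
  · set s : ℝ := if c ≤ 1 then -Real.log c - 1 else -1 with hsdef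
    set sp := max s 0 with hspdef
    set sm := max (-s) 0 with hsmdef
    have hsp0 : 0 ≤ sp := le_max_right _ _
    have hsm0 : 0 ≤ sm := le_max_right _ _
    have hsps : sp - sm = s := by
      rcases le_total 0 s with hs | hs
      · rw [hspdef, hsmdef, max_eq_left hs, max_eq_right (by linarith)]; ring
      · rw [hspdef, hsmdef, max_eq_right hs, max_eq_left (by linarith)]; ring
    have hpt : ∀ y, max (-hfun (k y)) 0 + sm * k y + sp * c
        ≤ max (-hfun c) 0 + k y + sp * k y + sm * c := by
      intro y
      have hnt := neg_tangent (hk0 y) h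
      rw [← hsdef] at hnt
      have e : s * (k y - c) = sp * k y - sm * k y - sp * c + sm * c := by
        rw [← hsps]; ring
      linarith [hnt, e]
    have hok : Measurable fun y => ENNReal.ofReal (k y) := ENNReal.measurable_ofReal.comp hk
    have hof : ∀ y, ENNReal.ofReal (-hfun (k y)) + ENNReal.ofReal sm * ENNReal.ofReal (k y)
          + ENNReal.ofReal (sp * c)
        ≤ ENNReal.ofReal (-hfun c) + ENNReal.ofReal (k y)
          + ENNReal.ofReal sp * ENNReal.ofReal (k y) + ENNReal.ofReal (sm * c) := by
      intro y
      rw [← ENNReal.ofReal_mul hsm0, ← ENNReal.ofReal_mul hsp0,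
        ← ofReal_max_zero (-hfun (k y)), ← ofReal_max_zero (-hfun c),
        ← ENNReal.ofReal_add (le_max_right _ _) (mul_nonneg hsm0 (hk0 y)),
        ← ENNReal.ofReal_add (add_nonneg (le_max_right _ _) (mul_nonneg hsm0 (hk0 y))) (mul_nonneg hsp0 hc0),
        ← ENNReal.ofReal_add (le_max_right _ _) (hk0 y),
        ← ENNReal.ofReal_add (add_nonneg (le_max_right _ _) (hk0 y)) (mul_nonneg hsp0 (hk0 y)),
        ← ENNReal.ofReal_add (add_nonneg (add_nonneg (le_max_right _ _) (hk0 y)) (mul_nonneg hsp0 (hk0 y))) (mul_nonneg hsm0 hc0)]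
      exact ENNReal.ofReal_le_ofReal (hpt y)
    have hmono := lintegral_mono (μ := μ) hof
    have e1 : ∫⁻ y, (ENNReal.ofReal (-hfun (k y)) + ENNReal.ofReal sm * ENNReal.ofReal (k y)
          + ENNReal.ofReal (sp * c)) ∂μ
        = (∫⁻ y, ENNReal.ofReal (-hfun (k y)) ∂μ)
          + (ENNReal.ofReal sm * G + ENNReal.ofReal sp * G) := by
      rw [lintegral_add_right _ measurable_const, lintegral_add_right _ (hok.const_mul _),
        lintegral_const_mul _ hok, lintegral_const, measure_univ, mul_one,
        ENNReal.ofReal_mul hsp0, hcdef, ENNReal.ofReal_toReal hG, add_assoc]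
    have e2 : ∫⁻ y, (ENNReal.ofReal (-hfun c) + ENNReal.ofReal (k y)
          + ENNReal.ofReal sp * ENNReal.ofReal (k y) + ENNReal.ofReal (sm * c)) ∂μ
        = (ENNReal.ofReal (-hfun c) + G)
          + (ENNReal.ofReal sm * G + ENNReal.ofReal sp * G) := by
      rw [lintegral_add_right _ measurable_const, lintegral_add_right _ (hok.const_mul _),
        lintegral_add_right _ hok, lintegral_const, measure_univ, mul_one,
        lintegral_const_mul _ hok, ENNReal.ofReal_mul hsm0, hcdef, ENNReal.ofReal_toReal hG,
        lintegral_const, measure_univ, mul_one]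
      ring
    rw [e1, e2] at hmono
    have hfin : ENNReal.ofReal sm * G + ENNReal.ofReal sp * G ≠ ⊤ :=
      ENNReal.add_ne_top.2 ⟨ENNReal.mul_ne_top ENNReal.ofReal_ne_top hG,
        ENNReal.mul_ne_top ENNReal.ofReal_ne_top hG⟩
    exact (ENNReal.add_le_add_iff_right hfin).1 hmono

lemma ennnorm_split (t : ℝ) : (‖t‖₊ : ℝ≥0∞) = ENNReal.ofReal t + ENNReal.ofReal (-t) := by
  rcases le_total 0 t with h | h
  · simp [← enorm_eq_nnnorm, Real.enorm_eq_ofReal h, ENNReal.ofReal_of_nonpos (neg_nonpos.2 h)]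
  · rw [ENNReal.ofReal_of_nonpos h, zero_add, ← nnnorm_neg,
      ← enorm_eq_nnnorm, Real.enorm_eq_ofReal (neg_nonneg.2 h)]

lemma lintegral_ofReal_ne_top {α : Type*} [MeasurableSpace α] {μ : Measure α} {φ : α → ℝ}
    (hφ : Integrable φ μ) : ∫⁻ x, ENNReal.ofReal (φ x) ∂μ ≠ ⊤ := by
  refine ne_top_of_le_ne_top hφ.2.ne (lintegral_mono fun x => ?_)
  rw [enorm_eq_nnnorm, ennnorm_split]
  exact le_add_right (le_refl _)

lemma integrable_of_parts {α : Type*} [MeasurableSpace α] {μ : Measure α} {φ : α → ℝ}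
    (hm : Measurable φ) (h1 : ∫⁻ x, ENNReal.ofReal (φ x) ∂μ ≠ ⊤)
    (h2 : ∫⁻ x, ENNReal.ofReal (-φ x) ∂μ ≠ ⊤) : Integrable φ μ := by
  refine ⟨hm.aestronglyMeasurable, ?_⟩
  rw [HasFiniteIntegral]
  calc ∫⁻ x, ‖φ x‖₊ ∂μ
      = ∫⁻ x, (ENNReal.ofReal (φ x) + ENNReal.ofReal (-φ x)) ∂μ := by
        simp_rw [ennnorm_split]
    _ = (∫⁻ x, ENNReal.ofReal (φ x) ∂μ) + ∫⁻ x, ENNReal.ofReal (-φ x) ∂μ :=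
        lintegral_add_left (ENNReal.measurable_ofReal.comp hm) _
    _ < ⊤ := ENNReal.add_lt_top.2 ⟨h1.lt_top, h2.lt_top⟩

lemma coe_ennreal_real {a : ℝ≥0∞} (ha : a ≠ ⊤) : (a : EReal) = ((a.toReal : ℝ) : EReal) := by
  conv_lhs => rw [← ENNReal.ofReal_toReal ha]
  rw [EReal.coe_ennreal_ofReal, max_eq_left ENNReal.toReal_nonneg]

lemma eInt_eq_integral {d : ℕ} {φ : Rd d → ℝ} (hφ : Integrable φ volume) :
    eInt φ = ((∫ x, φ x : ℝ) : EReal) := by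
  have h1 := lintegral_ofReal_ne_top hφ
  have h2 := lintegral_ofReal_ne_top hφ.neg
  simp only [Pi.neg_apply] at h2
  rw [eInt, integral_eq_lintegral_pos_part_sub_lintegral_neg_part hφ,
    coe_ennreal_real h1, coe_ennreal_real h2, ← EReal.coe_sub]

lemma tonelli_conv {d : ℕ} (μ : Measure (Rd d)) [IsProbabilityMeasure μ]
    {w : Rd d → ℝ≥0∞} (hw : Measurable w) :
    ∫⁻ x, (∫⁻ y, w (x - y) ∂μ) ∂(volume : Measure (Rd d)) = ∫⁻ x, w x := by
  rw [lintegral_lintegral_swap (f := fun x y => w (x - y))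
    (by exact (hw.comp (measurable_fst.sub measurable_snd)).aemeasurable)]
  simp_rw [lintegral_sub_right_eq_self w _, lintegral_const, measure_univ, mul_one]

lemma conv_entropy_le {d : ℕ} (μ : Measure (Rd d)) [IsProbabilityMeasure μ] (f : Rd d → ℝ)
    (hf_meas : Measurable f) (hf_nonneg : ∀ x, 0 ≤ f x)
    (hf_int : Integrable f) (hf_one : ∫ x, f x = 1) :
    eInt (fun x => hfun (∫ y, f (x - y) ∂μ)) ≤ eInt (fun x => hfun (f x)) := by
  have hhf_meas : Measurable fun x => hfun (f x) :=
    hf_meas.mul (Real.measurable_log.comp hf_meas)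
  set G : Rd d → ℝ≥0∞ := fun x => ∫⁻ y, ENNReal.ofReal (f (x - y)) ∂μ with hGdef
  have hGmeas : Measurable G := by
    apply Measurable.lintegral_prod_right'
      (f := fun p : Rd d × Rd d => ENNReal.ofReal (f (p.1 - p.2)))
    exact ENNReal.measurable_ofReal.comp (hf_meas.comp (measurable_fst.sub measurable_snd))
  have hky : ∀ x : Rd d, Measurable fun y : Rd d => f (x - y) :=
    fun x => hf_meas.comp (measurable_const.sub measurable_id)
  have hintG : ∀ x : Rd d, G x ≠ ⊤ → Integrable (fun y => f (x - y)) μ := by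
    intro x hx
    refine ⟨(hky x).aestronglyMeasurable, ?_⟩
    rw [hasFiniteIntegral_iff_ofReal (Filter.Eventually.of_forall fun y => hf_nonneg _)]
    exact lt_top_iff_ne_top.2 hx
  have hgG : ∀ x : Rd d, ∫ y, f (x - y) ∂μ = (G x).toReal := by
    intro x
    by_cases hx : Integrable (fun y => f (x - y)) μ
    · rw [integral_eq_lintegral_of_nonneg_ae (Filter.Eventually.of_forall fun y => hf_nonneg _)
        (hky x).aestronglyMeasurable]
    · rw [integral_undef hx]
      have hxt : G x = ⊤ := by
        by_contra hne
        exact hx (hintG x hne)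
      rw [hxt, ENNReal.toReal_top]
  -- the lintegral of G is 1
  have h1 : ∫⁻ x, ENNReal.ofReal (f x) ∂(volume : Measure (Rd d)) = 1 := by
    rw [← ofReal_integral_eq_lintegral_ofReal hf_int (Filter.Eventually.of_forall hf_nonneg),
      hf_one, ENNReal.ofReal_one]
  have hGint : ∫⁻ x, G x ∂(volume : Measure (Rd d)) = 1 := by
    rw [hGdef]
    rw [tonelli_conv μ (w := fun x => ENNReal.ofReal (f x)) (by exact ENNReal.measurable_ofReal.comp hf_meas), h1]
  have hGfin : ∀ᵐ x : Rd d, G x ≠ ⊤ := by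
    filter_upwards [ae_lt_top hGmeas (by rw [hGint]; exact ENNReal.one_ne_top)] with x hx
    exact hx.ne
  -- rewrite the goal in terms of G
  have hrw : (fun x : Rd d => hfun (∫ y, f (x - y) ∂μ)) = fun x => hfun ((G x).toReal) := by
    funext x; rw [hgG x]
  rw [hrw]
  set A := ∫⁻ x, ENNReal.ofReal (hfun ((G x).toReal)) with hA
  set B := ∫⁻ x, ENNReal.ofReal (-hfun ((G x).toReal)) with hB
  set A' := ∫⁻ x, ENNReal.ofReal (hfun (f x)) with hA'
  set B' := ∫⁻ x, ENNReal.ofReal (-hfun (f x)) with hB'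
  have hgmeas : Measurable fun x => hfun ((G x).toReal) := by
    have : Measurable fun x => (G x).toReal := ENNReal.measurable_toReal.comp hGmeas
    exact this.mul (Real.measurable_log.comp this)
  -- B' ≤ B + 1
  have hB'B : B' ≤ B + 1 := by
    have hψ : ∀ᵐ x : Rd d, (∫⁻ y, ENNReal.ofReal (-hfun (f (x - y))) ∂μ)
        ≤ ENNReal.ofReal (-hfun ((G x).toReal)) + G x := by
      filter_upwards [hGfin] with x hx
      exact psi_le μ (hky x) (fun y => hf_nonneg _) hx
    have hTB : ∫⁻ x, (∫⁻ y, ENNReal.ofReal (-hfun (f (x - y))) ∂μ)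
        ∂(volume : Measure (Rd d)) = B' := by
      rw [hB']
      exact tonelli_conv μ (w := fun x => ENNReal.ofReal (-hfun (f x))) (by exact ENNReal.measurable_ofReal.comp hhf_meas.neg)
    calc B' = ∫⁻ x, (∫⁻ y, ENNReal.ofReal (-hfun (f (x - y))) ∂μ)
          ∂(volume : Measure (Rd d)) := hTB.symm
      _ ≤ ∫⁻ x, (ENNReal.ofReal (-hfun ((G x).toReal)) + G x) ∂(volume : Measure (Rd d)) :=
          lintegral_mono_ae hψ
      _ = B + 1 := by
          rw [lintegral_add_left (show Measurable fun x => ENNReal.ofReal (-hfun ((G x).toReal)) from by exact ENNReal.measurable_ofReal.comp hgmeas.neg), hGint, hB]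
  show ((A : EReal) - (B : EReal)) ≤ ((A' : EReal) - (B' : EReal))
  by_cases hB't : B' = ⊤
  · have hBt : B = ⊤ := by
      by_contra hBne
      have : B + 1 ≠ ⊤ := ENNReal.add_ne_top.2 ⟨hBne, ENNReal.one_ne_top⟩
      exact this (top_le_iff.1 (hB't ▸ hB'B))
    rw [hBt, EReal.coe_ennreal_top, EReal.sub_top]
    exact bot_le
  by_cases hA't : A' = ⊤
  · rw [hA't, EReal.coe_ennreal_top, coe_ennreal_real hB't, EReal.top_sub_coe]
    exact le_top
  by_cases hBt : B = ⊤
  · rw [hBt, EReal.coe_ennreal_top, EReal.sub_top]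
    exact bot_le
  -- main case: everything finite
  have hprod : Integrable (fun p : Rd d × Rd d => hfun (f (p.1 - p.2)))
      ((volume : Measure (Rd d)).prod μ) := by
    have hpm : Measurable fun p : Rd d × Rd d => hfun (f (p.1 - p.2)) :=
      hhf_meas.comp (measurable_fst.sub measurable_snd)
    refine ⟨hpm.aestronglyMeasurable, ?_⟩
    rw [HasFiniteIntegral]
    have : ∫⁻ p : Rd d × Rd d, ‖hfun (f (p.1 - p.2))‖₊ ∂((volume : Measure (Rd d)).prod μ)
        = A' + B' := by
      rw [lintegral_prod _ hpm.nnnorm.coe_nnreal_ennreal.aemeasurable]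
      dsimp only
      have hsplit : ∀ x : Rd d, ∫⁻ y, (‖hfun (f (x - y))‖₊ : ℝ≥0∞) ∂μ
          = (∫⁻ y, ENNReal.ofReal (hfun (f (x - y))) ∂μ)
            + ∫⁻ y, ENNReal.ofReal (-hfun (f (x - y))) ∂μ := by
        intro x
        simp_rw [ennnorm_split]
        have hm1 : Measurable fun y : Rd d => ENNReal.ofReal (hfun (f (x - y))) :=
          ENNReal.measurable_ofReal.comp
            (hhf_meas.comp (measurable_const.sub measurable_id))
        exact lintegral_add_left hm1 _
      simp_rw [hsplit]
      rw [lintegral_add_left, hA', hB']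
      · congr 1
        · exact tonelli_conv μ (w := fun x => ENNReal.ofReal (hfun (f x)))
            (by exact ENNReal.measurable_ofReal.comp hhf_meas)
        · exact tonelli_conv μ (w := fun x => ENNReal.ofReal (-hfun (f x)))
            (by exact ENNReal.measurable_ofReal.comp hhf_meas.neg)
      · exact Measurable.lintegral_prod_right'
          (f := fun p : Rd d × Rd d => ENNReal.ofReal (hfun (f (p.1 - p.2))))
          (ENNReal.measurable_ofReal.comp (hhf_meas.comp (measurable_fst.sub measurable_snd)))
    refine (le_of_eq this).trans_lt ?_
    exact ENNReal.add_lt_top.2 ⟨lt_top_iff_ne_top.2 hA't, lt_top_iff_ne_top.2 hB't⟩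
  set J : Rd d → ℝ := fun x => ∫ y, hfun (f (x - y)) ∂μ with hJ
  have haeJint : ∀ᵐ x : Rd d, Integrable (fun y => hfun (f (x - y))) μ :=
    hprod.prod_right_ae
  have haeJensen : ∀ᵐ x : Rd d, hfun ((G x).toReal) ≤ J x := by
    filter_upwards [hGfin, haeJint] with x h1 h2
    have := jensen_integral μ (fun y => hf_nonneg (x - y)) (hintG x h1) h2
    rwa [hgG x] at this
  have hJint : Integrable J volume := hprod.integral_prod_left
  have hJeq : ∫ x, J x = ∫ x, hfun (f x) := by
    rw [hJ]
    rw [integral_integral_swap (f := fun x y => hfun (f (x - y))) hprod]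
    simp_rw [integral_sub_right_eq_self (fun x => hfun (f x)) _, integral_const,
      probReal_univ, one_smul]
  have hAt : A ≠ ⊤ := by
    refine ne_top_of_le_ne_top (lintegral_ofReal_ne_top hJint) (lintegral_mono_ae ?_)
    filter_upwards [haeJensen] with x hx
    exact ENNReal.ofReal_le_ofReal hx
  have hgint : Integrable (fun x => hfun ((G x).toReal)) volume :=
    integrable_of_parts hgmeas hAt hBt
  have hfint : Integrable (fun x => hfun (f x)) volume :=
    integrable_of_parts hhf_meas hA't hB't
  have hfinal : ∫ x, hfun ((G x).toReal) ≤ ∫ x, hfun (f x) := by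
    rw [← hJeq]
    exact integral_mono_ae hgint hJint haeJensen
  have e1 := eInt_eq_integral hgint
  have e2 := eInt_eq_integral hfint
  rw [eInt] at e1 e2
  rw [← hA, ← hB] at e1
  rw [← hA', ← hB'] at e2
  rw [e1, e2]
  exact EReal.coe_le_coe_iff.2 hfinal

lemma ofReal_sub_add (a b : ℝ) :
    ENNReal.ofReal a ≤ ENNReal.ofReal (a - b) + ENNReal.ofReal b := by
  calc ENNReal.ofReal a = ENNReal.ofReal ((a - b) + b) := by ring_nf
    _ ≤ _ := ENNReal.ofReal_add_le

lemma lintegral_ofReal_cmul {d : ℕ} {f : Rd d → ℝ} (hfm : Measurable f)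
    (hf0 : ∀ x, 0 ≤ f x) (hone : ∫⁻ x, ENNReal.ofReal (f x) ∂(volume : Measure (Rd d)) = 1)
    (c : ℝ) : ∫⁻ x, ENNReal.ofReal (c * f x) ∂(volume : Measure (Rd d)) = ENNReal.ofReal c := by
  rcases le_total 0 c with hc | hc
  · simp_rw [fun x => ENNReal.ofReal_mul (p := c) (q := f x) hc]
    rw [lintegral_const_mul _ (by exact ENNReal.measurable_ofReal.comp hfm), hone, mul_one]
  · have : ∀ x, ENNReal.ofReal (c * f x) = 0 := fun x =>
      ENNReal.ofReal_of_nonpos (mul_nonpos_of_nonpos_of_nonneg hc (hf0 x))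
    simp_rw [this, lintegral_zero, ENNReal.ofReal_of_nonpos hc]

lemma eInt_shift {d : ℕ} {φ f : Rd d → ℝ} (hφm : Measurable φ) (hfm : Measurable f)
    (hf0 : ∀ x, 0 ≤ f x) (hint : Integrable f)
    (hone : ∫⁻ x, ENNReal.ofReal (f x) ∂(volume : Measure (Rd d)) = 1) (c : ℝ) :
    eInt (fun x => φ x - c * f x) = eInt φ + ((-c : ℝ) : EReal) := by
  set A' := ∫⁻ x, ENNReal.ofReal (φ x) with hA'
  set B' := ∫⁻ x, ENNReal.ofReal (-φ x) with hB'
  set Ac := ∫⁻ x, ENNReal.ofReal (φ x - c * f x) with hAc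
  set Bc := ∫⁻ x, ENNReal.ofReal (-(φ x - c * f x)) with hBc
  have hκp := lintegral_ofReal_cmul hfm hf0 hone c
  have hκm := lintegral_ofReal_cmul hfm hf0 hone (-c)
  have hφcm : Measurable fun x => φ x - c * f x := hφm.sub (hfm.const_mul c)
  have hcfm : Measurable fun x => ENNReal.ofReal (c * f x) := by
    exact ENNReal.measurable_ofReal.comp (hfm.const_mul c)
  have hmcfm : Measurable fun x => ENNReal.ofReal (-c * f x) := by
    exact ENNReal.measurable_ofReal.comp (hfm.const_mul (-c))
  have h1 : A' ≤ Ac + ENNReal.ofReal c := by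
    rw [← hκp]
    rw [← lintegral_add_right _ hcfm]
    exact lintegral_mono fun x => ofReal_sub_add (φ x) (c * f x)
  have h2 : Ac ≤ A' + ENNReal.ofReal (-c) := by
    rw [← hκm]
    rw [← lintegral_add_right _ hmcfm]
    refine lintegral_mono fun x => ?_
    have e : (φ x - c * f x) - (-c * f x) = φ x := by ring
    have := ofReal_sub_add (φ x - c * f x) (-c * f x)
    rwa [e] at this
  have h3 : B' ≤ Bc + ENNReal.ofReal (-c) := by
    rw [← hκm]
    rw [← lintegral_add_right _ hmcfm]
    refine lintegral_mono fun x => ?_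
    have e : (-φ x) - (-c * f x) = -(φ x - c * f x) := by ring
    have := ofReal_sub_add (-φ x) (-c * f x)
    rwa [e] at this
  have h4 : Bc ≤ B' + ENNReal.ofReal c := by
    rw [← hκp]
    rw [← lintegral_add_right _ hcfm]
    refine lintegral_mono fun x => ?_
    have e : (-(φ x - c * f x)) - (c * f x) = -φ x := by ring
    have := ofReal_sub_add (-(φ x - c * f x)) (c * f x)
    rwa [e] at this
  show ((Ac : EReal) - (Bc : EReal)) = ((A' : EReal) - (B' : EReal)) + ((-c : ℝ) : EReal)
  by_cases hB't : B' = ⊤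
  · have hBct : Bc = ⊤ := by
      by_contra hne
      have : Bc + ENNReal.ofReal (-c) ≠ ⊤ :=
        ENNReal.add_ne_top.2 ⟨hne, ENNReal.ofReal_ne_top⟩
      exact this (top_le_iff.1 (hB't ▸ h3))
    rw [hBct, hB't, EReal.coe_ennreal_top, EReal.sub_top, EReal.sub_top, EReal.bot_add]
  have hBct : Bc ≠ ⊤ :=
    ne_top_of_le_ne_top (ENNReal.add_ne_top.2 ⟨hB't, ENNReal.ofReal_ne_top⟩) h4
  by_cases hA't : A' = ⊤
  · have hAct : Ac = ⊤ := by
      by_contra hne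
      have : Ac + ENNReal.ofReal c ≠ ⊤ :=
        ENNReal.add_ne_top.2 ⟨hne, ENNReal.ofReal_ne_top⟩
      exact this (top_le_iff.1 (hA't ▸ h1))
    rw [hAct, hA't, EReal.coe_ennreal_top, coe_ennreal_real hBct, coe_ennreal_real hB't,
      EReal.top_sub_coe, EReal.top_sub_coe, EReal.top_add_coe]
  have hAct : Ac ≠ ⊤ :=
    ne_top_of_le_ne_top (ENNReal.add_ne_top.2 ⟨hA't, ENNReal.ofReal_ne_top⟩) h2
  -- all finite
  have hφint : Integrable φ volume := integrable_of_parts hφm hA't hB't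
  have hsubint : Integrable (fun x => φ x - c * f x) volume := by
    exact hφint.sub (hint.const_mul c)
  have hcf : ∫ x, c * f x ∂(volume : Measure (Rd d)) = c := by
    rw [integral_const_mul]
    have hone' : ∫ x, f x ∂(volume : Measure (Rd d)) = 1 := by
      rw [integral_eq_lintegral_of_nonneg_ae (μ := (volume : Measure (Rd d))) (f := f)
        (Filter.Eventually.of_forall hf0) hfm.aestronglyMeasurable, hone]
      simp
    rw [hone', mul_one]
  have hcfint : Integrable (fun x => c * f x) volume := by exact hint.const_mul c
  have e1 := eInt_eq_integral hsubint
  have e2 := eInt_eq_integral hφint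
  rw [eInt] at e1 e2
  rw [← hAc, ← hBc] at e1
  rw [← hA', ← hB'] at e2
  rw [e1, e2, integral_sub hφint hcfint, hcf, EReal.coe_sub, sub_eq_add_neg, EReal.coe_neg]

lemma abs_inv_pow_smul {d : ℕ} {σ : ℝ} (hσ : 0 < σ) :
    |(σ⁻¹ ^ Module.finrank ℝ (Rd d))⁻¹| = σ ^ d := by
  rw [finrank_euclideanSpace_fin, inv_pow, inv_inv, abs_of_pos (pow_pos hσ d)]

lemma lintegral_comp_inv_smul {d : ℕ} {w : Rd d → ℝ≥0∞} (hw : Measurable w) {σ : ℝ}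
    (hσ : 0 < σ) : ∫⁻ x, w (σ⁻¹ • x) ∂(volume : Measure (Rd d))
      = ENNReal.ofReal (σ ^ d) * ∫⁻ x, w x := by
  have h0 : (σ⁻¹ : ℝ) ≠ 0 := inv_ne_zero hσ.ne'
  rw [← lintegral_map hw (measurable_const_smul σ⁻¹),
    Measure.map_addHaar_smul (volume : Measure (Rd d)) h0, lintegral_smul_measure,
    abs_inv_pow_smul hσ, smul_eq_mul]

lemma conv_entropy_scaled_le {d : ℕ} (μ : Measure (Rd d)) [IsProbabilityMeasure μ]
    (f : Rd d → ℝ) (hf_meas : Measurable f) (hf_nonneg : ∀ x, 0 ≤ f x)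
    (hf_int : Integrable f) (hf_one : ∫ x, f x = 1) {σ : ℝ} (hσ : 0 < σ) :
    eInt (fun x => hfun (∫ y, (σ ^ d)⁻¹ * f (σ⁻¹ • (x - y)) ∂μ))
      ≤ eInt (fun x => hfun (f x)) + ((-(d : ℝ) * Real.log σ : ℝ) : EReal) := by
  have hσd : (0:ℝ) < σ ^ d := pow_pos hσ d
  set t : ℝ := (σ ^ d)⁻¹ with ht
  have ht0 : (0:ℝ) < t := inv_pos.2 hσd
  set c : ℝ := (d : ℝ) * Real.log σ with hcdef
  have hlogt : Real.log t = -c := by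
    rw [ht, Real.log_inv, Real.log_pow, hcdef]
  set fσ : Rd d → ℝ := fun z => t * f (σ⁻¹ • z) with hfσ
  have hfσ_meas : Measurable fσ := (hf_meas.comp (measurable_const_smul σ⁻¹)).const_mul t
  have hfσ_nonneg : ∀ z, 0 ≤ fσ z := fun z => mul_nonneg ht0.le (hf_nonneg _)
  have hfσ_int : Integrable fσ volume := by
    exact (hf_int.comp_smul (inv_ne_zero hσ.ne')).const_mul t
  have hfσ_one : ∫ z, fσ z = 1 := by
    rw [hfσ]
    simp only
    rw [integral_const_mul, Measure.integral_comp_smul volume f σ⁻¹, hf_one,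
      smul_eq_mul, mul_one, abs_inv_pow_smul hσ, ht, inv_mul_cancel₀ hσd.ne']
  have hmain := conv_entropy_le μ fσ hfσ_meas hfσ_nonneg hfσ_int hfσ_one
  have hgoal_eq : (fun x : Rd d => hfun (∫ y, t * f (σ⁻¹ • (x - y)) ∂μ))
      = fun x => hfun (∫ y, fσ (x - y) ∂μ) := rfl
  rw [hgoal_eq]
  refine le_trans hmain ?_
  have hone_lint : ∫⁻ x, ENNReal.ofReal (f x) ∂(volume : Measure (Rd d)) = 1 := by
    rw [← ofReal_integral_eq_lintegral_ofReal hf_int (Filter.Eventually.of_forall hf_nonneg),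
      hf_one, ENNReal.ofReal_one]
  have hpoint : ∀ z, hfun (fσ z) = t * (hfun (f (σ⁻¹ • z)) - c * f (σ⁻¹ • z)) := by
    intro z
    rcases eq_or_lt_of_le (hf_nonneg (σ⁻¹ • z)) with h | h
    · rw [hfσ]
      simp only
      rw [← h, mul_zero]
      simp [hfun]
    · rw [hfσ]
      simp only
      rw [hfun, hfun, Real.log_mul ht0.ne' h.ne', hlogt]
      ring
  have hφm : Measurable fun x => hfun (f x) := hf_meas.mul (Real.measurable_log.comp hf_meas)
  have hΦm : Measurable fun x => hfun (f x) - c * f x := hφm.sub (hf_meas.const_mul c)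
  have eA : ∫⁻ x, ENNReal.ofReal (hfun (fσ x)) ∂(volume : Measure (Rd d))
      = ∫⁻ x, ENNReal.ofReal (hfun (f x) - c * f x) ∂(volume : Measure (Rd d)) := by
    have hp : ∀ x, ENNReal.ofReal (hfun (fσ x)) = ENNReal.ofReal t
        * ENNReal.ofReal (hfun (f (σ⁻¹ • x)) - c * f (σ⁻¹ • x)) := by
      intro x
      rw [hpoint x, ENNReal.ofReal_mul ht0.le]
    simp_rw [hp]
    have hm1 : Measurable fun x : Rd d =>
        ENNReal.ofReal (hfun (f (σ⁻¹ • x)) - c * f (σ⁻¹ • x)) :=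
      ENNReal.measurable_ofReal.comp (hΦm.comp (measurable_const_smul σ⁻¹))
    have hm2 : Measurable fun x : Rd d => ENNReal.ofReal (hfun (f x) - c * f x) :=
      ENNReal.measurable_ofReal.comp hΦm
    rw [lintegral_const_mul _ hm1]
    rw [lintegral_comp_inv_smul hm2 hσ]
    rw [← mul_assoc, ← ENNReal.ofReal_mul ht0.le, ht, inv_mul_cancel₀ hσd.ne',
      ENNReal.ofReal_one, one_mul]
  have eB : ∫⁻ x, ENNReal.ofReal (-hfun (fσ x)) ∂(volume : Measure (Rd d))
      = ∫⁻ x, ENNReal.ofReal (-(hfun (f x) - c * f x)) ∂(volume : Measure (Rd d)) := by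
    have hp : ∀ x, ENNReal.ofReal (-hfun (fσ x)) = ENNReal.ofReal t
        * ENNReal.ofReal (-(hfun (f (σ⁻¹ • x)) - c * f (σ⁻¹ • x))) := by
      intro x
      rw [hpoint x, ← mul_neg, ENNReal.ofReal_mul ht0.le]
    simp_rw [hp]
    have hm1 : Measurable fun x : Rd d =>
        ENNReal.ofReal (-(hfun (f (σ⁻¹ • x)) - c * f (σ⁻¹ • x))) :=
      ENNReal.measurable_ofReal.comp (hΦm.comp (measurable_const_smul σ⁻¹)).neg
    have hm2 : Measurable fun x : Rd d => ENNReal.ofReal (-(hfun (f x) - c * f x)) :=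
      ENNReal.measurable_ofReal.comp hΦm.neg
    rw [lintegral_const_mul _ hm1]
    rw [lintegral_comp_inv_smul hm2 hσ]
    rw [← mul_assoc, ← ENNReal.ofReal_mul ht0.le, ht, inv_mul_cancel₀ hσd.ne',
      ENNReal.ofReal_one, one_mul]
  have heq : eInt (fun x => hfun (fσ x)) = eInt (fun x => hfun (f x) - c * f x) := by
    rw [eInt, eInt, eA, eB]
  rw [heq, eInt_shift hφm hf_meas hf_nonneg hf_int hone_lint c]
  have hcc : (-c : ℝ) = (-(d : ℝ) * Real.log σ : ℝ) := by rw [hcdef]; ring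
  rw [hcc]

/-- **Entropy bound for convolutions**: `∫ h(m*f) ≤ ∫ h(f)`, and for the rescaled kernel
`f_σ(x) = σ^{-d} f(x/σ)`, `∫ h(m*f_σ) ≤ ∫ h(f) - d log σ`. -/
theorem entropy_of_convolution_le {d : ℕ}
    (m : PM (Rd d)) (f : Rd d → ℝ)
    (hf_meas : Measurable f) (hf_nonneg : ∀ x, 0 ≤ f x)
    (hf_int : Integrable f) (hf_one : ∫ x, f x = 1) :
    eInt (fun x => hfun (∫ y, f (x - y) ∂(m : Measure (Rd d)))) ≤ eInt (fun x => hfun (f x)) ∧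
    ∀ σ : ℝ, 0 < σ →
      eInt (fun x => hfun (∫ y, (σ ^ d)⁻¹ * f (σ⁻¹ • (x - y)) ∂(m : Measure (Rd d))))
        ≤ eInt (fun x => hfun (f x)) + ((-(d : ℝ) * Real.log σ : ℝ) : EReal) := by
  haveI : IsProbabilityMeasure (m : Measure (Rd d)) := m.prop
  refine ⟨conv_entropy_le (m : Measure (Rd d)) f hf_meas hf_nonneg hf_int hf_one,
    fun σ hσ => conv_entropy_scaled_le (m : Measure (Rd d)) f hf_meas hf_nonneg hf_int hf_one hσ⟩

end
end

section
/- Suppose F : P_2(ℝ^d) → ℝ admits first and second order linear functional derivatives δF/δm and δ²F/δm², each jointly continuous in all variables, and there exists L > 0 such that for all ℝ^d-valued random variables η₁, η₂ with finite second moments, E[sup_{ν∈P_2(ℝ^d)} |(δF/δm)(ν,η₁)|] + E[sup_{ν∈P_2(ℝ^d)} |(δ²F/δm²)(ν,η₁,η₂)|] ≤ L. Then for every μ ∈ P_2(ℝ^d), every N ∈ ℕ, and every i.i.d. sequence X_1,…,X_N of ℝ^d-valued random variables with law μ, the empirical measure μ_N = N^{−1}Σ_{i=1}^N δ_{X_i}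 satisfies |E[F(μ_N)] − F(μ)| ≤ 2L/N. -/
open MeasureTheory Real Filter Topology
open scoped ENNReal NNReal RealInnerProductSpace

noncomputable section

/-- The empirical measure `N⁻¹ ∑ δ_{x_i}`. -/
def empMeas {d : ℕ} (N : ℕ) (hN : 0 < N) (x : Fin N → Rd d) : PM (Rd d) :=
  ⟨(N : ℝ≥0∞)⁻¹ • ∑ i : Fin N, Measure.dirac (x i), by
    have hN0 : (N : ℝ≥0∞) ≠ 0 := Nat.cast_ne_zero.mpr hN.ne'
    constructor
    have : ((∑ i : Fin N, Measure.dirac (x i)) : Measure (Rd d)) Set.univ = N := by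
      rw [Measure.coe_finset_sum]
      simp
    rw [Measure.smul_apply, this, smul_eq_mul,
      ENNReal.inv_mul_cancel hN0 (ENNReal.natCast_ne_top N)]⟩

-- Helpers
lemma integrable_dirac_any {α E : Type*} [MeasurableSpace α] [MeasurableSingletonClass α]
    [NormedAddCommGroup E] (f : α → E) (a : α) : Integrable f (Measure.dirac a) := by
  have h : (fun _ : α => f a) =ᵐ[Measure.dirac a] f := by
    rw [MeasureTheory.ae_dirac_eq]; exact Filter.eventually_pure.2 rfl
  exact (integrable_const (f a)).congr h

lemma integral_convComb {α : Type*} [MeasurableSpace α] (lam : ℝ) (μ ν : PM α) (f : α → ℝ)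
    (hfμ : Integrable f (μ : Measure α)) (hfν : Integrable f (ν : Measure α)) :
    ∫ x, f x ∂(convComb lam μ ν : Measure α)
      = (1 - max 0 (min lam 1)) * ∫ x, f x ∂(μ : Measure α)
        + (max 0 (min lam 1)) * ∫ x, f x ∂(ν : Measure α) := by
  have ht0 : 0 ≤ max 0 (min lam 1) := le_max_left _ _
  have ht1 : max 0 (min lam 1) ≤ 1 := max_le zero_le_one (min_le_right _ _)
  show ∫ x, f x ∂(ENNReal.ofReal (1 - max 0 (min lam 1)) • (μ : Measure α)
      + ENNReal.ofReal (max 0 (min lam 1)) • (ν : Measure α)) = _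
  rw [integral_add_measure (hfμ.smul_measure ENNReal.ofReal_ne_top)
      (hfν.smul_measure ENNReal.ofReal_ne_top),
    integral_smul_measure, integral_smul_measure,
    ENNReal.toReal_ofReal (by linarith), ENNReal.toReal_ofReal ht0]
  simp [smul_eq_mul]

lemma P2_convComb {α : Type*} [MeasurableSpace α] [NormedAddCommGroup α] {lam : ℝ} {μ ν : PM α}
    (h1 : P2 μ) (h2 : P2 ν) : P2 (convComb lam μ ν) :=
  (h1.smul_measure ENNReal.ofReal_ne_top).add_measure (h2.smul_measure ENNReal.ofReal_ne_top)

lemma integrable_empMeas {d : ℕ} {N : ℕ} {hN : 0 < N} (x : Fin N → Rd d) (f : Rd d → ℝ) :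
    Integrable f (empMeas N hN x : Measure (Rd d)) := by
  show Integrable f ((N : ℝ≥0∞)⁻¹ • ∑ i : Fin N, Measure.dirac (x i))
  refine Integrable.smul_measure ?_ (by simp [hN.ne'])
  rw [integrable_finset_sum_measure]
  exact fun i _ => integrable_dirac_any f (x i)

lemma integral_empMeas {d : ℕ} {N : ℕ} {hN : 0 < N} (x : Fin N → Rd d) (f : Rd d → ℝ) :
    ∫ y, f y ∂(empMeas N hN x : Measure (Rd d)) = (N : ℝ)⁻¹ * ∑ i, f (x i) := by
  show ∫ y, f y ∂((N : ℝ≥0∞)⁻¹ • ∑ i : Fin N, Measure.dirac (x i)) = _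
  rw [integral_smul_measure,
    integral_finset_sum_measure (fun i _ => integrable_dirac_any f (x i))]
  simp [integral_dirac, ENNReal.toReal_inv]

lemma P2_empMeas {d : ℕ} {N : ℕ} {hN : 0 < N} (x : Fin N → Rd d) : P2 (empMeas N hN x) :=
  integrable_empMeas x _

lemma integrable_of_bounded {α : Type*} [MeasurableSpace α] {f : α → ℝ} (ρ : Measure α)
    [IsFiniteMeasure ρ] (hm : AEStronglyMeasurable f ρ) (C : ℝ) (h : ∀ y, |f y| ≤ C) :
    Integrable f ρ :=
  (integrable_const C).mono' hm (Filter.Eventually.of_forall fun y => by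
    simpa [Real.norm_eq_abs] using h y)

lemma cont_integral_param {S β : Type*} [TopologicalSpace S]
    [FirstCountableTopology S] [MeasurableSpace β] [TopologicalSpace β]
    [OpensMeasurableSpace β] (ρ : Measure β) [IsFiniteMeasure ρ] (W : β × S → ℝ)
    (hW : Continuous W) (C : ℝ) (hbdd : ∀ p, |W p| ≤ C) :
    Continuous fun s => ∫ a, W (a, s) ∂ρ := by
  rw [continuous_iff_continuousAt]
  intro s
  apply tendsto_integral_filter_of_dominated_convergence (fun _ => C)
  · exact Filter.Eventually.of_forall fun s' =>
      (hW.comp (continuous_id.prodMk continuous_const)).aestronglyMeasurable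
  · exact Filter.Eventually.of_forall fun s' => Filter.Eventually.of_forall fun a => by
      simpa [Real.norm_eq_abs] using hbdd (a, s')
  · exact integrable_const C
  · exact Filter.Eventually.of_forall fun a =>
      ((hW.comp (continuous_const.prodMk continuous_id)).tendsto s)


lemma continuous_convComb_empMeas {d : ℕ} (μ : PM (Rd d)) (N : ℕ) (hN : 0 < N) :
    Continuous fun p : ℝ × (Fin N → Rd d) => convComb p.1 μ (empMeas N hN p.2) := by
  rw [continuous_iff_continuousAt]
  intro p
  show Tendsto _ (𝓝 p) _
  rw [ProbabilityMeasure.tendsto_iff_forall_integral_tendsto]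
  intro f
  have key : ∀ q : ℝ × (Fin N → Rd d),
      ∫ ω, f ω ∂((convComb q.1 μ (empMeas N hN q.2)) : Measure (Rd d))
        = (1 - max 0 (min q.1 1)) * (∫ ω, f ω ∂(μ : Measure (Rd d)))
          + (max 0 (min q.1 1)) * ((N : ℝ)⁻¹ * ∑ i, f (q.2 i)) := by
    intro q
    rw [integral_convComb _ _ _ _ (f.integrable _) (integrable_empMeas _ _),
      integral_empMeas]
  simp only [key]
  have cf : Continuous fun q : ℝ × (Fin N → Rd d) =>
      (1 - max 0 (min q.1 1)) * (∫ ω, f ω ∂(μ : Measure (Rd d)))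
        + (max 0 (min q.1 1)) * ((N : ℝ)⁻¹ * ∑ i, f (q.2 i)) := by
    have hclamp : Continuous fun q : ℝ × (Fin N → Rd d) => max 0 (min q.1 1) :=
      continuous_const.max (continuous_fst.min continuous_const)
    have hsum : Continuous fun q : ℝ × (Fin N → Rd d) => ∑ i, f (q.2 i) :=
      continuous_finset_sum _ fun i _ => f.continuous.comp ((continuous_apply i).comp
        continuous_snd)
    exact ((continuous_const.sub hclamp).mul continuous_const).add
      (hclamp.mul (continuous_const.mul hsum))
  exact cf.tendsto p



set_option maxHeartbeats 2000000

/-- **Quantitative law of large numbers for `F` along empirical measures of i.i.d. samples**: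
`|E[F(μ_N)] - F(μ)| ≤ 2L/N`.  (The expectation over an i.i.d. sample with law `μ` is the
integral against the product measure `μ^{⊗N}`.) -/
theorem empirical_measure_approximation {d : ℕ}
    (F : PM (Rd d) → ℝ) (DF : PM (Rd d) → Rd d → ℝ) (D2F : PM (Rd d) → Rd d → Rd d → ℝ)
    -- `DF` is the (jointly continuous) linear functional derivative of `F`
    (hcont1 : Continuous fun p : PM (Rd d) × Rd d => DF p.1 p.2)
    (hderiv1 : ∀ m m' : PM (Rd d),
      F m' - F m = ∫ lam in (0:ℝ)..1,
        (∫ x, DF (convComb lam m m') x ∂(m' : Measure (Rd d))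
          - ∫ x, DF (convComb lam m m') x ∂(m : Measure (Rd d))))
    -- `D2F` is the (jointly continuous) second order linear functional derivative of `F`
    (hcont2 : Continuous fun p : PM (Rd d) × Rd d × Rd d => D2F p.1 p.2.1 p.2.2)
    (hderiv2 : ∀ (x : Rd d) (m m' : PM (Rd d)),
      DF m' x - DF m x = ∫ lam in (0:ℝ)..1,
        (∫ y, D2F (convComb lam m m') x y ∂(m' : Measure (Rd d))
          - ∫ y, D2F (convComb lam m m') x y ∂(m : Measure (Rd d))))
    -- the suprema over `ν ∈ P₂` below are finite ...
    (hBdd1 : ∀ x : Rd d, BddAbove (Set.range fun ν : {ν : PM (Rd d) // P2 ν} => |DF ν.1 x|))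
    (hBdd2 : ∀ x y : Rd d,
      BddAbove (Set.range fun ν : {ν : PM (Rd d) // P2 ν} => |D2F ν.1 x y|))
    (L : ℝ) (hL0 : 0 < L)
    -- ... and `E[sup_ν |δF/δm(ν,η₁)|] + E[sup_ν |δ²F/δm²(ν,η₁,η₂)|] ≤ L` for all random
    -- variables `η₁, η₂` with finite second moments (`jl` is their joint law)
    (hL : ∀ jl : PM (Rd d × Rd d),
      Integrable (fun p => ‖p.1‖ ^ 2 + ‖p.2‖ ^ 2) (jl : Measure (Rd d × Rd d)) →
      (∫ p, (⨆ ν : {ν : PM (Rd d) // P2 ν}, |DF ν.1 p.1|) ∂(jl : Measure (Rd d × Rd d)))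
        + (∫ p, (⨆ ν : {ν : PM (Rd d) // P2 ν}, |D2F ν.1 p.1 p.2|)
            ∂(jl : Measure (Rd d × Rd d))) ≤ L)
    (μ : PM (Rd d)) (hμ : P2 μ) (N : ℕ) (hN : 0 < N) :
    |(∫ x : Fin N → Rd d, F (empMeas N hN x)
        ∂(Measure.pi fun _ : Fin N => (μ : Measure (Rd d)))) - F μ| ≤ 2 * L / N := by
  -- Step A: pointwise bounds |DF ν x| ≤ L and |D2F ν x y| ≤ L for ν ∈ P2
  haveI instNE : Nonempty {ν : PM (Rd d) // P2 ν} := ⟨⟨μ, hμ⟩⟩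
  have hsum : ∀ x y : Rd d, (⨆ ν : {ν : PM (Rd d) // P2 ν}, |DF ν.1 x|)
      + (⨆ ν : {ν : PM (Rd d) // P2 ν}, |D2F ν.1 x y|) ≤ L := by
    intro x y
    have h1 := hL ⟨Measure.dirac (x, y), Measure.dirac.isProbabilityMeasure⟩
      (integrable_dirac_any _ _)
    rw [ProbabilityMeasure.coe_mk, integral_dirac, integral_dirac] at h1
    exact h1
  have hsup1 : ∀ x : Rd d, 0 ≤ ⨆ ν : {ν : PM (Rd d) // P2 ν}, |DF ν.1 x| := fun x =>
    le_trans (abs_nonneg _) (le_ciSup (hBdd1 x) ⟨μ, hμ⟩)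
  have hsup2 : ∀ x y : Rd d, 0 ≤ ⨆ ν : {ν : PM (Rd d) // P2 ν}, |D2F ν.1 x y| := fun x y =>
    le_trans (abs_nonneg _) (le_ciSup (hBdd2 x y) ⟨μ, hμ⟩)
  have hDF : ∀ (ν : PM (Rd d)), P2 ν → ∀ x, |DF ν x| ≤ L := by
    intro ν hν x
    have h2 := le_ciSup (hBdd1 x) (⟨ν, hν⟩ : {ν : PM (Rd d) // P2 ν})
    have h3 := hsum x x
    have h4 := hsup2 x x
    simp only at h2
    linarith
  have hD2F : ∀ (ν : PM (Rd d)), P2 ν → ∀ x y, |D2F ν x y| ≤ L := by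
    intro ν hν x y
    have h2 := le_ciSup (hBdd2 x y) (⟨ν, hν⟩ : {ν : PM (Rd d) // P2 ν})
    have h3 := hsum x y
    have h4 := hsup1 x
    simp only at h2
    linarith
  clear hL hBdd1 hBdd2 hsum hsup1 hsup2
  -- setup
  obtain ⟨M, rfl⟩ : ∃ M, N = M + 1 := ⟨N - 1, (Nat.succ_pred_eq_of_pos hN).symm⟩
  set P : Measure (Fin (M + 1) → Rd d) := Measure.pi fun _ => (μ : Measure (Rd d)) with hPdef
  haveI : IsProbabilityMeasure P := by rw [hPdef]; infer_instance
  have hMpos : (0:ℝ) < (M + 1 : ℕ) := by positivity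
  set Φ : ℝ × (Fin (M + 1) → Rd d) → PM (Rd d) :=
    fun p => convComb p.1 μ (empMeas (M + 1) hN p.2) with hΦdef
  have hΦc : Continuous Φ := continuous_convComb_empMeas μ (M + 1) hN
  have hΦ2 : ∀ p, P2 (Φ p) := fun p => P2_convComb hμ (P2_empMeas p.2)
  have hbΦ : ∀ p y, |DF (Φ p) y| ≤ L := fun p y => hDF _ (hΦ2 p) y
  set V : ℝ × (Fin (M + 1) → Rd d) → ℝ :=
    fun p => ∫ y, DF (Φ p) y ∂(μ : Measure (Rd d)) with hVdef
  have hVc : Continuous V := by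
    exact cont_integral_param (μ : Measure (Rd d))
      (fun q : Rd d × (ℝ × (Fin (M + 1) → Rd d)) => DF (Φ q.2) q.1)
      (hcont1.comp ((hΦc.comp continuous_snd).prodMk continuous_fst)) L
      (fun q => hbΦ _ _)
  have hVb : ∀ p, |V p| ≤ L := by
    intro p
    have h := norm_integral_le_of_norm_le (μ := (μ : Measure (Rd d)))
      (f := fun y => DF (Φ p) y) (integrable_const L)
      (Filter.Eventually.of_forall fun y => by simpa [Real.norm_eq_abs] using hbΦ p y)
    rw [hVdef]
    simpa [Real.norm_eq_abs] using h
  set g : ℝ × (Fin (M + 1) → Rd d) → ℝ :=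
    fun p => ((M + 1 : ℕ) : ℝ)⁻¹ * ∑ i, DF (Φ p) (p.2 i) - V p with hgdef
  have hDFi : ∀ i : Fin (M + 1), Continuous fun p : ℝ × (Fin (M + 1) → Rd d) =>
      DF (Φ p) (p.2 i) := fun i =>
    hcont1.comp (hΦc.prodMk ((continuous_apply i).comp continuous_snd))
  have hgc : Continuous g := by
    exact ((continuous_const.mul (continuous_finset_sum _ fun i _ => hDFi i)).sub hVc)
  have hgb : ∀ p, |g p| ≤ 2 * L := by
    intro p
    have h1 : |((M + 1 : ℕ) : ℝ)⁻¹ * ∑ i, DF (Φ p) (p.2 i)| ≤ L := by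
      rw [abs_mul, abs_of_nonneg (by positivity : (0:ℝ) ≤ ((M + 1 : ℕ) : ℝ)⁻¹)]
      have h2 : |∑ i, DF (Φ p) (p.2 i)| ≤ ∑ i : Fin (M + 1), L :=
        le_trans (Finset.abs_sum_le_sum_abs _ _)
          (Finset.sum_le_sum fun i _ => hbΦ p (p.2 i))
      rw [Finset.sum_const, Finset.card_univ, Fintype.card_fin, nsmul_eq_mul] at h2
      calc ((M + 1 : ℕ) : ℝ)⁻¹ * |∑ i, DF (Φ p) (p.2 i)|
          ≤ ((M + 1 : ℕ) : ℝ)⁻¹ * ((M + 1 : ℕ) * L) := by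
            apply mul_le_mul_of_nonneg_left _ (by positivity)
            exact_mod_cast h2
        _ = L := by field_simp
    calc |g p| ≤ |((M + 1 : ℕ) : ℝ)⁻¹ * ∑ i, DF (Φ p) (p.2 i)| + |V p| := abs_sub _ _
      _ ≤ 2 * L := by have := hVb p; linarith
  -- the basic identity from hderiv1
  have hident : ∀ x : Fin (M + 1) → Rd d,
      F (empMeas (M + 1) hN x) - F μ = ∫ lam in (0:ℝ)..1, g (lam, x) := by
    intro x
    rw [hderiv1 μ (empMeas (M + 1) hN x)]
    apply intervalIntegral.integral_congr
    intro lam _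
    have : ∫ y, DF (convComb lam μ (empMeas (M + 1) hN x)) y
        ∂(empMeas (M + 1) hN x : Measure (Rd d))
        = ((M + 1 : ℕ) : ℝ)⁻¹ * ∑ i, DF (Φ (lam, x)) (x i) := by
      rw [integral_empMeas]
    rw [hgdef]
    show _ - _ = ((M + 1 : ℕ) : ℝ)⁻¹ * ∑ i, DF (Φ (lam, x)) (x i) - V (lam, x)
    rw [← this]
  -- per-lambda bound (to be proven)
  have key : ∀ lam : ℝ, |∫ x, g (lam, x) ∂P| ≤ 2 * L / ((M + 1 : ℕ) : ℝ) := by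
    intro lam
    have ht0 : 0 ≤ max 0 (min lam 1) := le_max_left _ _
    have ht1 : max 0 (min lam 1) ≤ 1 := max_le zero_le_one (min_le_right _ _)
    set tl := max 0 (min lam 1) with htldef
    -- integrability of the pieces over P
    have hInt1 : ∀ i : Fin (M + 1), Integrable (fun x => DF (Φ (lam, x)) (x i)) P :=
      fun i => integrable_of_bounded _
        (((hDFi i).comp (continuous_const.prodMk continuous_id)).aestronglyMeasurable) L
        (fun x => hbΦ _ _)
    have hIntV : Integrable (fun x => V (lam, x)) P :=
      integrable_of_bounded _
        ((hVc.comp (continuous_const.prodMk continuous_id)).aestronglyMeasurable) L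
        (fun x => hVb _)
    have hsplit : ∫ x, g (lam, x) ∂P
        = ((M + 1 : ℕ) : ℝ)⁻¹
            * ∑ i, ((∫ x, DF (Φ (lam, x)) (x i) ∂P) - ∫ x, V (lam, x) ∂P) := by
      have e1 : ∫ x, g (lam, x) ∂P
          = ∫ x, (((M + 1 : ℕ) : ℝ)⁻¹ * ∑ i, DF (Φ (lam, x)) (x i)) ∂P
            - ∫ x, V (lam, x) ∂P := by
        rw [← integral_sub (Integrable.const_mul (integrable_finset_sum _ fun i _ => hInt1 i) _)
          hIntV]
      rw [e1, integral_const_mul, integral_finset_sum _ (fun i _ => hInt1 i),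
        Finset.sum_sub_distrib, Finset.sum_const, Finset.card_univ, Fintype.card_fin,
        nsmul_eq_mul, mul_sub]
      congr 1
      field_simp
    -- the per-coordinate estimate
    have keyi : ∀ i : Fin (M + 1),
        |(∫ x, DF (Φ (lam, x)) (x i) ∂P) - ∫ x, V (lam, x) ∂P|
          ≤ 2 * L * tl / ((M + 1 : ℕ) : ℝ) := by
      intro i
      set P' : Measure (Fin M → Rd d) := Measure.pi fun _ => (μ : Measure (Rd d)) with hP'def
      haveI : IsProbabilityMeasure P' := by rw [hP'def]; infer_instance
      have hψ := measurePreserving_piFinSuccAbove (fun _ : Fin (M + 1) => (μ : Measure (Rd d))) i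
      have hcomp : ∀ h : (Fin (M + 1) → Rd d) → ℝ,
          ∫ x, h x ∂P
            = ∫ z : Rd d × (Fin M → Rd d), h (i.insertNth z.1 z.2)
                ∂((μ : Measure (Rd d)).prod P') := by
        intro h
        rw [← MeasurePreserving.integral_comp' (MeasurePreserving.symm _ hψ) h]
        rfl
      have hins : Continuous fun z : Rd d × (Fin M → Rd d) =>
          (i.insertNth z.1 z.2 : Fin (M + 1) → Rd d) := by
        apply continuous_pi
        intro j
        refine Fin.succAboveCases i ?_ ?_ j
        · simp only [Fin.insertNth_apply_same]
          exact continuous_fst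
        · intro j'
          simp only [Fin.insertNth_apply_succAbove]
          exact (continuous_apply j').comp continuous_snd
      -- inner functions
      set A : (Fin M → Rd d) → ℝ :=
        fun r => ∫ a, DF (Φ (lam, i.insertNth a r)) a ∂(μ : Measure (Rd d)) with hAdef
      set B : (Fin M → Rd d) → ℝ :=
        fun r => ∫ a, V (lam, i.insertNth a r) ∂(μ : Measure (Rd d)) with hBdef
      have hWAc : Continuous fun z : Rd d × (Fin M → Rd d) =>
          DF (Φ (lam, i.insertNth z.1 z.2)) z.1 :=
        hcont1.comp (((hΦc.comp (continuous_const.prodMk hins))).prodMk continuous_fst)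
      have hWBc : Continuous fun z : Rd d × (Fin M → Rd d) => V (lam, i.insertNth z.1 z.2) :=
        hVc.comp (continuous_const.prodMk hins)
      have hIc1 : Integrable (fun z : Rd d × (Fin M → Rd d) =>
          DF (Φ (lam, i.insertNth z.1 z.2)) z.1) ((μ : Measure (Rd d)).prod P') :=
        integrable_of_bounded _ hWAc.aestronglyMeasurable L (fun z => hbΦ _ _)
      have hIc2 : Integrable (fun z : Rd d × (Fin M → Rd d) =>
          V (lam, i.insertNth z.1 z.2)) ((μ : Measure (Rd d)).prod P') :=
        integrable_of_bounded _ hWBc.aestronglyMeasurable L (fun z => hVb _)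
      have e1 : ∫ x, DF (Φ (lam, x)) (x i) ∂P = ∫ r, A r ∂P' := by
        rw [hcomp (fun x => DF (Φ (lam, x)) (x i))]
        simp only [Fin.insertNth_apply_same]
        exact integral_prod_symm _ hIc1
      have e2 : ∫ x, V (lam, x) ∂P = ∫ r, B r ∂P' := by
        rw [hcomp (fun x => V (lam, x))]
        exact integral_prod_symm _ hIc2
      have hAc : Continuous A :=
        cont_integral_param (μ : Measure (Rd d)) _ hWAc L (fun z => hbΦ _ _)
      have hBc : Continuous B :=
        cont_integral_param (μ : Measure (Rd d)) _ hWBc L (fun z => hVb _)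
      have hAb : ∀ r, |A r| ≤ L := by
        intro r
        have h := norm_integral_le_of_norm_le (μ := (μ : Measure (Rd d)))
          (f := fun a => DF (Φ (lam, i.insertNth a r)) a) (integrable_const L)
          (Filter.Eventually.of_forall fun a => by simpa [Real.norm_eq_abs] using hbΦ _ _)
        rw [hAdef]
        simpa [Real.norm_eq_abs] using h
      have hBb : ∀ r, |B r| ≤ L := by
        intro r
        have h := norm_integral_le_of_norm_le (μ := (μ : Measure (Rd d)))
          (f := fun a => V (lam, i.insertNth a r)) (integrable_const L)
          (Filter.Eventually.of_forall fun a => by simpa [Real.norm_eq_abs] using hVb _)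
        rw [hBdef]
        simpa [Real.norm_eq_abs] using h
      have hAint : Integrable A P' := integrable_of_bounded _ hAc.aestronglyMeasurable L hAb
      have hBint : Integrable B P' := integrable_of_bounded _ hBc.aestronglyMeasurable L hBb
      -- pointwise estimate |A r - B r| ≤ 2 L tl / (M+1)
      have hpt : ∀ r : Fin M → Rd d, |A r - B r| ≤ 2 * L * tl / ((M + 1 : ℕ) : ℝ) := by
        intro r
        -- innermost second-order estimate
        have hin : ∀ a y : Rd d,
            |DF (Φ (lam, i.insertNth y r)) y - DF (Φ (lam, i.insertNth a r)) y|
              ≤ 2 * L * tl / ((M + 1 : ℕ) : ℝ) := by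
          intro a y
          rw [hderiv2 y (Φ (lam, i.insertNth a r)) (Φ (lam, i.insertNth y r))]
          have hb : ∀ s ∈ Set.uIoc (0:ℝ) 1,
              ‖(∫ z, D2F (convComb s (Φ (lam, i.insertNth a r)) (Φ (lam, i.insertNth y r))) y z
                  ∂(Φ (lam, i.insertNth y r) : Measure (Rd d)))
                - ∫ z, D2F (convComb s (Φ (lam, i.insertNth a r)) (Φ (lam, i.insertNth y r))) y z
                  ∂(Φ (lam, i.insertNth a r) : Measure (Rd d))‖
              ≤ 2 * L * tl / ((M + 1 : ℕ) : ℝ) := by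
            intro s _
            set ν := convComb s (Φ (lam, i.insertNth a r)) (Φ (lam, i.insertNth y r)) with hνdef
            have hν2 : P2 ν := P2_convComb (hΦ2 _) (hΦ2 _)
            have hhb : ∀ z, |D2F ν y z| ≤ L := fun z => hD2F ν hν2 y z
            have hhc : Continuous fun z => D2F ν y z :=
              hcont2.comp (continuous_const.prodMk (continuous_const.prodMk continuous_id))
            have hIμ : Integrable (fun z => D2F ν y z) (μ : Measure (Rd d)) :=
              integrable_of_bounded _ hhc.aestronglyMeasurable L hhb
            have c1 : ∫ z, D2F ν y z ∂(Φ (lam, i.insertNth y r) : Measure (Rd d))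
                = (1 - tl) * (∫ z, D2F ν y z ∂(μ : Measure (Rd d)))
                  + tl * (((M + 1 : ℕ) : ℝ)⁻¹ * ∑ j, D2F ν y ((i.insertNth y r : Fin (M + 1) → Rd d) j)) := by
              rw [show Φ (lam, i.insertNth y r)
                  = convComb lam μ (empMeas (M + 1) hN (i.insertNth y r)) from rfl,
                integral_convComb _ _ _ _ hIμ (integrable_empMeas _ _), integral_empMeas]
            have c2 : ∫ z, D2F ν y z ∂(Φ (lam, i.insertNth a r) : Measure (Rd d))
                = (1 - tl) * (∫ z, D2F ν y z ∂(μ : Measure (Rd d)))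
                  + tl * (((M + 1 : ℕ) : ℝ)⁻¹ * ∑ j, D2F ν y ((i.insertNth a r : Fin (M + 1) → Rd d) j)) := by
              rw [show Φ (lam, i.insertNth a r)
                  = convComb lam μ (empMeas (M + 1) hN (i.insertNth a r)) from rfl,
                integral_convComb _ _ _ _ hIμ (integrable_empMeas _ _), integral_empMeas]
            rw [c1, c2]
            have hsy : ∑ j, D2F ν y ((i.insertNth y r : Fin (M + 1) → Rd d) j)
                = D2F ν y y + ∑ j', D2F ν y (r j') := by
              rw [Fin.sum_univ_succAbove _ i]
              simp
            have hsa : ∑ j, D2F ν y ((i.insertNth a r : Fin (M + 1) → Rd d) j)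
                = D2F ν y a + ∑ j', D2F ν y (r j') := by
              rw [Fin.sum_univ_succAbove _ i]
              simp
            rw [hsy, hsa]
            have heq : ((1 - tl) * (∫ z, D2F ν y z ∂(μ : Measure (Rd d)))
                  + tl * (((M + 1 : ℕ) : ℝ)⁻¹ * (D2F ν y y + ∑ j', D2F ν y (r j'))))
                - ((1 - tl) * (∫ z, D2F ν y z ∂(μ : Measure (Rd d)))
                  + tl * (((M + 1 : ℕ) : ℝ)⁻¹ * (D2F ν y a + ∑ j', D2F ν y (r j'))))
                = tl * ((M + 1 : ℕ) : ℝ)⁻¹ * (D2F ν y y - D2F ν y a) := by ring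
            rw [heq, Real.norm_eq_abs, abs_mul, abs_mul, abs_of_nonneg ht0,
              abs_of_nonneg (by positivity : (0:ℝ) ≤ ((M + 1 : ℕ) : ℝ)⁻¹)]
            have h5 : |D2F ν y y - D2F ν y a| ≤ 2 * L := by
              have := hhb y
              have := hhb a
              calc |D2F ν y y - D2F ν y a| ≤ |D2F ν y y| + |D2F ν y a| := abs_sub _ _
                _ ≤ 2 * L := by linarith
            calc tl * ((M + 1 : ℕ) : ℝ)⁻¹ * |D2F ν y y - D2F ν y a|
                ≤ tl * ((M + 1 : ℕ) : ℝ)⁻¹ * (2 * L) := by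
                  apply mul_le_mul_of_nonneg_left h5 (by positivity)
              _ = 2 * L * tl / ((M + 1 : ℕ) : ℝ) := by ring
          have hb2 := intervalIntegral.norm_integral_le_of_norm_le_const hb
          simpa [Real.norm_eq_abs] using hb2
        -- integrability of inner integrands in a
        have hfy : Integrable (fun a : Rd d =>
            ∫ y, DF (Φ (lam, i.insertNth y r)) y ∂(μ : Measure (Rd d))) (μ : Measure (Rd d)) :=
          integrable_const _
        have hfa : Integrable (fun a : Rd d => V (lam, i.insertNth a r)) (μ : Measure (Rd d)) :=
          integrable_of_bounded _
            ((hVc.comp (continuous_const.prodMk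
              (continuous_id.finInsertNth i continuous_const))).aestronglyMeasurable) L
            (fun a => hVb _)
        have hAr : A r = ∫ _a, (∫ y, DF (Φ (lam, i.insertNth y r)) y ∂(μ : Measure (Rd d)))
            ∂(μ : Measure (Rd d)) := by
          rw [integral_const, probReal_univ, one_smul]
        have hsub : A r - B r = ∫ a, ((∫ y, DF (Φ (lam, i.insertNth y r)) y
            ∂(μ : Measure (Rd d))) - V (lam, i.insertNth a r)) ∂(μ : Measure (Rd d)) := by
          rw [integral_sub hfy hfa, ← hAr, hBdef]
        rw [hsub]
        have hinner : ∀ a : Rd d,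
            ‖(∫ y, DF (Φ (lam, i.insertNth y r)) y ∂(μ : Measure (Rd d)))
              - V (lam, i.insertNth a r)‖ ≤ 2 * L * tl / ((M + 1 : ℕ) : ℝ) := by
          intro a
          have hVeq : V (lam, i.insertNth a r)
              = ∫ y, DF (Φ (lam, i.insertNth a r)) y ∂(μ : Measure (Rd d)) := rfl
          rw [hVeq]
          have hg1 : Integrable (fun y => DF (Φ (lam, i.insertNth y r)) y)
              (μ : Measure (Rd d)) :=
            integrable_of_bounded _
              ((hcont1.comp ((hΦc.comp (continuous_const.prodMk
                (continuous_id.finInsertNth i continuous_const))).prodMk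
                  continuous_id)).aestronglyMeasurable) L (fun y => hbΦ _ _)
          have hg2 : Integrable (fun y => DF (Φ (lam, i.insertNth a r)) y)
              (μ : Measure (Rd d)) :=
            integrable_of_bounded _
              ((hcont1.comp (continuous_const.prodMk continuous_id)).aestronglyMeasurable) L
              (fun y => hbΦ _ _)
          rw [← integral_sub hg1 hg2]
          have h6 := norm_integral_le_of_norm_le (μ := (μ : Measure (Rd d)))
            (f := fun y => DF (Φ (lam, i.insertNth y r)) y - DF (Φ (lam, i.insertNth a r)) y)
            (integrable_const (2 * L * tl / ((M + 1 : ℕ) : ℝ)))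
            (Filter.Eventually.of_forall fun y => by
              simpa [Real.norm_eq_abs] using hin a y)
          simpa using h6
        have h7 := norm_integral_le_of_norm_le (μ := (μ : Measure (Rd d)))
          (f := fun a => (∫ y, DF (Φ (lam, i.insertNth y r)) y ∂(μ : Measure (Rd d)))
            - V (lam, i.insertNth a r))
          (integrable_const (2 * L * tl / ((M + 1 : ℕ) : ℝ)))
          (Filter.Eventually.of_forall hinner)
        simpa [Real.norm_eq_abs] using h7
      -- conclude keyi
      rw [e1, e2, ← integral_sub hAint hBint]
      have h8 := norm_integral_le_of_norm_le (μ := P') (f := fun r => A r - B r)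
        (integrable_const (2 * L * tl / ((M + 1 : ℕ) : ℝ)))
        (Filter.Eventually.of_forall fun r => by simpa [Real.norm_eq_abs] using hpt r)
      simpa [Real.norm_eq_abs] using h8
    -- combine over i
    rw [hsplit]
    have h9 : |∑ i, ((∫ x, DF (Φ (lam, x)) (x i) ∂P) - ∫ x, V (lam, x) ∂P)|
        ≤ (M + 1 : ℕ) * (2 * L * tl / ((M + 1 : ℕ) : ℝ)) := by
      calc |∑ i, ((∫ x, DF (Φ (lam, x)) (x i) ∂P) - ∫ x, V (lam, x) ∂P)|
          ≤ ∑ i : Fin (M + 1), |(∫ x, DF (Φ (lam, x)) (x i) ∂P) - ∫ x, V (lam, x) ∂P| :=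
            Finset.abs_sum_le_sum_abs _ _
        _ ≤ ∑ _i : Fin (M + 1), 2 * L * tl / ((M + 1 : ℕ) : ℝ) :=
            Finset.sum_le_sum fun i _ => keyi i
        _ = (M + 1 : ℕ) * (2 * L * tl / ((M + 1 : ℕ) : ℝ)) := by
            rw [Finset.sum_const, Finset.card_univ, Fintype.card_fin, nsmul_eq_mul]
    rw [abs_mul, abs_of_nonneg (by positivity : (0:ℝ) ≤ ((M + 1 : ℕ) : ℝ)⁻¹)]
    calc ((M + 1 : ℕ) : ℝ)⁻¹ * |∑ i, ((∫ x, DF (Φ (lam, x)) (x i) ∂P) - ∫ x, V (lam, x) ∂P)|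
        ≤ ((M + 1 : ℕ) : ℝ)⁻¹ * ((M + 1 : ℕ) * (2 * L * tl / ((M + 1 : ℕ) : ℝ))) :=
          mul_le_mul_of_nonneg_left h9 (by positivity)
      _ = 2 * L * tl / ((M + 1 : ℕ) : ℝ) := by field_simp
      _ ≤ 2 * L / ((M + 1 : ℕ) : ℝ) := by
          apply (div_le_div_iff_of_pos_right hMpos).mpr
          nlinarith
  -- Fubini in lambda
  have hgC : Continuous fun z : (Fin (M + 1) → Rd d) × ℝ => g (z.2, z.1) :=
    hgc.comp (continuous_snd.prodMk continuous_fst)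
  haveI hfin : IsFiniteMeasure (volume.restrict (Set.Ioc (0:ℝ) 1)) :=
    ⟨by simp [Real.volume_Ioc]⟩
  have hgint : Integrable (fun z : (Fin (M + 1) → Rd d) × ℝ => g (z.2, z.1))
      (P.prod (volume.restrict (Set.Ioc (0:ℝ) 1))) :=
    integrable_of_bounded _ hgC.aestronglyMeasurable (2 * L) (fun z => hgb _)
  have hmarg : Integrable (fun x => ∫ lam in Set.Ioc (0:ℝ) 1, g (lam, x)) P :=
    hgint.integral_prod_left
  have hFint : Integrable (fun x => F (empMeas (M + 1) hN x)) P := by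
    have he : (fun x => F (empMeas (M + 1) hN x))
        = fun x => F μ + ∫ lam in Set.Ioc (0:ℝ) 1, g (lam, x) := by
      funext x
      have h := hident x
      rw [intervalIntegral.integral_of_le zero_le_one] at h
      linarith
    rw [he]
    exact (integrable_const (F μ)).add hmarg
  have hswap : ∫ x, (∫ lam in Set.Ioc (0:ℝ) 1, g (lam, x)) ∂P
      = ∫ lam in Set.Ioc (0:ℝ) 1, (∫ x, g (lam, x) ∂P) :=
    integral_integral_swap hgint
  have step1 : (∫ x, F (empMeas (M + 1) hN x) ∂P) - F μ
      = ∫ lam in Set.Ioc (0:ℝ) 1, (∫ x, g (lam, x) ∂P) := by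
    have e0 : ∫ x, (F (empMeas (M + 1) hN x) - F μ) ∂P
        = (∫ x, F (empMeas (M + 1) hN x) ∂P) - F μ := by
      rw [integral_sub hFint (integrable_const (F μ)), integral_const]
      simp
    rw [← e0, ← hswap]
    apply integral_congr_ae
    apply Filter.Eventually.of_forall
    intro x
    show F (empMeas (M + 1) hN x) - F μ = ∫ lam in Set.Ioc (0:ℝ) 1, g (lam, x)
    rw [hident x, intervalIntegral.integral_of_le zero_le_one]
  rw [show (∫ x : Fin (M + 1) → Rd d, F (empMeas (M + 1) hN x)
      ∂(Measure.pi fun _ : Fin (M + 1) => (μ : Measure (Rd d)))) = ∫ x, F (empMeas (M + 1) hN x) ∂P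
      from rfl, step1]
  have hfinal := norm_setIntegral_le_of_norm_le_const (μ := volume)
      (s := Set.Ioc (0:ℝ) 1) (f := fun lam => ∫ x, g (lam, x) ∂P)
      (C := 2 * L / ((M + 1 : ℕ) : ℝ))
      (by simp [Real.volume_Ioc])
      (fun lam _ => by simpa [Real.norm_eq_abs] using key lam)
  rw [Real.volume_real_Ioc] at hfinal
  simpa [Real.norm_eq_abs] using hfinal


end
end
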